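/- arXiv:1404.4758 — 11 statements merged into one kernel-verified Lean document; each statement's English description precedes it below -/
import Mathlib

section
/- Let θ be a real number with 0 < θ < 1 and θ ≠ 1/2, and let ξ = e^{2πiθ} (so |ξ| = 1 and ξ ≠ ±1). Then for every integer k ≥ 0, the value at s = −k of the analytic continuation of the Lerch zeta-function φ(s,ξ) = ∑_{m≥1} ξ^m m^{−s} is nonzero; that is, expZeta θ (−k) ≠ 0 for all k ∈ ℕ. (Lemma 2.5, case ξ ≠ ±1.) -/
open Complex HurwitzZeta

section Aux

open Set Filter Topology

variable {θ : ℝ}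

private lemma aux_hasSum_even (hθ0 : 0 < θ) (hθ1 : θ < 1) {m : ℕ} (hm : 2 ≤ m) :
    HasSum (fun n : ℕ ↦ (((1 / (n + θ) ^ m + 1 / (n + 1 - θ) ^ m) / 2 : ℝ) : ℂ))
      (hurwitzZetaEven (θ : UnitAddCircle) (m : ℂ)) := by
  have h := hasSum_nat_hurwitzZetaEven_of_mem_Icc (a := θ) ⟨hθ0.le, hθ1.le⟩
    (s := (m : ℂ)) (by rw [natCast_re]; exact_mod_cast by omega)
  refine h.congr_fun fun n ↦ ?_
  rw [cpow_natCast, cpow_natCast]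
  push_cast
  ring

private lemma aux_hasSum_odd (hθ0 : 0 < θ) (hθ1 : θ < 1) {m : ℕ} (hm : 2 ≤ m) :
    HasSum (fun n : ℕ ↦ (((1 / (n + θ) ^ m - 1 / (n + 1 - θ) ^ m) / 2 : ℝ) : ℂ))
      (hurwitzZetaOdd (θ : UnitAddCircle) (m : ℂ)) := by
  have h := hasSum_nat_hurwitzZetaOdd_of_mem_Icc (a := θ) ⟨hθ0.le, hθ1.le⟩
    (s := (m : ℂ)) (by rw [natCast_re]; exact_mod_cast by omega)
  refine h.congr_fun fun n ↦ ?_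
  rw [cpow_natCast, cpow_natCast]
  push_cast
  ring

private lemma aux_even_pos (hθ0 : 0 < θ) (hθ1 : θ < 1) {m : ℕ} (hm : 2 ≤ m) :
    ∃ e : ℝ, hurwitzZetaEven (θ : UnitAddCircle) (m : ℂ) = (e : ℂ) ∧ 0 < e := by
  obtain ⟨hre, him⟩ := Complex.hasSum_iff _ _ |>.mp (aux_hasSum_even hθ0 hθ1 hm)
  simp only [ofReal_re, ofReal_im] at hre him
  have him0 : (hurwitzZetaEven (θ : UnitAddCircle) (m : ℂ)).im = 0 :=
    him.unique hasSum_zero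
  refine ⟨(hurwitzZetaEven (θ : UnitAddCircle) (m : ℂ)).re,
    (Complex.ext (by simp) (by simp [him0])).symm, ?_⟩
  have hpos : ∀ n : ℕ, 0 < (1 / (n + θ) ^ m + 1 / (n + 1 - θ) ^ m) / 2 := by
    intro n
    have h1 : 0 < (n : ℝ) + θ := by positivity
    have h2 : 0 < (n : ℝ) + 1 - θ := by
      have : (0 : ℝ) ≤ n := n.cast_nonneg
      linarith
    positivity
  have h0 : (1 / ((0 : ℕ) + θ) ^ m + 1 / ((0 : ℕ) + 1 - θ) ^ m) / 2 ≤ _ :=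
    le_hasSum hre 0 fun j _ ↦ (hpos j).le
  exact lt_of_lt_of_le (hpos 0) h0

private lemma aux_odd_ne (hθ0 : 0 < θ) (hθ1 : θ < 1) (hθhalf : θ ≠ 1 / 2) {m : ℕ}
    (hm : 2 ≤ m) :
    ∃ o : ℝ, hurwitzZetaOdd (θ : UnitAddCircle) (m : ℂ) = (o : ℂ) ∧ o ≠ 0 := by
  obtain ⟨hre, him⟩ := Complex.hasSum_iff _ _ |>.mp (aux_hasSum_odd hθ0 hθ1 hm)
  simp only [ofReal_re, ofReal_im] at hre him
  have him0 : (hurwitzZetaOdd (θ : UnitAddCircle) (m : ℂ)).im = 0 :=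
    him.unique hasSum_zero
  refine ⟨(hurwitzZetaOdd (θ : UnitAddCircle) (m : ℂ)).re,
    (Complex.ext (by simp) (by simp [him0])).symm, ?_⟩
  have h1 : ∀ n : ℕ, 0 < (n : ℝ) + θ := fun n ↦ by positivity
  have h2 : ∀ n : ℕ, 0 < (n : ℝ) + 1 - θ := fun n ↦ by
    have : (0 : ℝ) ≤ n := n.cast_nonneg
    linarith
  rcases lt_or_gt_of_ne hθhalf with hlt | hgt
  · have hpos : ∀ n : ℕ, 0 < (1 / (n + θ) ^ m - 1 / (n + 1 - θ) ^ m) / 2 := by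
      intro n
      have hp : ((n : ℝ) + θ) ^ m < ((n : ℝ) + 1 - θ) ^ m :=
        pow_lt_pow_left₀ (by linarith) (h1 n).le (by omega)
      have := one_div_lt_one_div_of_lt (by positivity) hp
      linarith
    have h0 := le_hasSum hre 0 fun j _ ↦ (hpos j).le
    exact ne_of_gt (lt_of_lt_of_le (hpos 0) h0)
  · have hpos : ∀ n : ℕ, 0 < -((1 / (n + θ) ^ m - 1 / (n + 1 - θ) ^ m) / 2) := by
      intro n
      have hp : ((n : ℝ) + 1 - θ) ^ m < ((n : ℝ) + θ) ^ m :=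
        pow_lt_pow_left₀ (by linarith) (h2 n).le (by omega)
      have := one_div_lt_one_div_of_lt (pow_pos (h2 n) m) hp
      linarith
    have h0 := le_hasSum hre.neg 0 fun j _ ↦ (hpos j).le
    have : 0 < -(hurwitzZetaOdd (θ : UnitAddCircle) (m : ℂ)).re :=
      lt_of_lt_of_le (hpos 0) h0
    intro h
    rw [h] at this
    simp at this

private lemma aux_odd_im_real (hθ0 : 0 < θ) (hθ1 : θ < 1) {x : ℝ} (hx : 1 < x) :
    (hurwitzZetaOdd (θ : UnitAddCircle) (x : ℂ)).im = 0 := by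
  have h := hasSum_nat_hurwitzZetaOdd_of_mem_Icc (a := θ) ⟨hθ0.le, hθ1.le⟩
    (s := (x : ℂ)) (by rwa [ofReal_re])
  have h' : HasSum (fun n : ℕ ↦ (((1 / (n + θ) ^ x - 1 / (n + 1 - θ) ^ x) / 2 : ℝ) : ℂ))
      (hurwitzZetaOdd (θ : UnitAddCircle) (x : ℂ)) := by
    refine h.congr_fun fun n ↦ ?_
    have h1 : (0 : ℝ) ≤ (n : ℝ) + θ := by positivity
    have h2 : (0 : ℝ) ≤ (n : ℝ) + 1 - θ := by
      have : (0 : ℝ) ≤ n := n.cast_nonneg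
      linarith
    rw [show ((n : ℂ) + θ) = (((n : ℝ) + θ : ℝ) : ℂ) by push_cast; ring,
      show ((n : ℂ) + 1 - θ) = (((n : ℝ) + 1 - θ : ℝ) : ℂ) by push_cast; ring,
      ← ofReal_cpow h1, ← ofReal_cpow h2]
    push_cast
    ring
  obtain ⟨-, him⟩ := Complex.hasSum_iff _ _ |>.mp h'
  simp only [ofReal_im] at him
  exact him.unique hasSum_zero

private lemma aux_odd_im_one (hθ0 : 0 < θ) (hθ1 : θ < 1) :
    (hurwitzZetaOdd (θ : UnitAddCircle) 1).im = 0 := by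
  have hc : ContinuousAt (hurwitzZetaOdd (θ : UnitAddCircle)) 1 :=
    (differentiable_hurwitzZetaOdd _).continuous.continuousAt
  have hcast : Tendsto (fun x : ℝ ↦ (x : ℂ)) (𝓝[>] 1) (𝓝 1) :=
    ((Complex.continuous_ofReal.tendsto 1).mono_left nhdsWithin_le_nhds).congr
      (fun x ↦ rfl) |>.congr' (by simp) |>.mono_right (by simp [ofReal_one])
  have ht : Tendsto (fun x : ℝ ↦ (hurwitzZetaOdd (θ : UnitAddCircle) (x : ℂ)).im)
      (𝓝[>] (1 : ℝ)) (𝓝 ((hurwitzZetaOdd (θ : UnitAddCircle) 1).im)) :=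
    (Complex.continuous_im.continuousAt.tendsto.comp hc.tendsto).comp hcast
  have ht0 : Tendsto (fun x : ℝ ↦ (hurwitzZetaOdd (θ : UnitAddCircle) (x : ℂ)).im)
      (𝓝[>] (1 : ℝ)) (𝓝 0) := by
    refine Tendsto.congr' ?_ tendsto_const_nhds
    filter_upwards [self_mem_nhdsWithin] with x hx
    exact (aux_odd_im_real hθ0 hθ1 hx).symm
  exact tendsto_nhds_unique ht ht0

end Aux

open scoped Real

/-- Lemma 2.5, case `ξ ≠ ±1`: for `ξ = e^{2πiθ}` with `0 < θ < 1`, `θ ≠ 1/2`,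
the analytic continuation of the Lerch zeta-function `φ(s, ξ)` is nonzero at
every nonpositive integer `s = -k`. -/
theorem expZeta_neg_nat_ne_zero (θ : ℝ) (hθ0 : 0 < θ) (hθ1 : θ < 1)
    (hθhalf : θ ≠ 1 / 2) (k : ℕ) :
    expZeta (θ : UnitAddCircle) (-(k : ℂ)) ≠ 0 := by
  rcases Nat.eq_zero_or_pos k with rfl | hk
  · -- the case `k = 0`
    have hne : ∀ n : ℕ, (1 : ℂ) ≠ -(n : ℂ) := by
      intro n h
      have := congrArg Complex.re h
      simp only [one_re, neg_re, natCast_re] at this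
      linarith [n.cast_nonneg (α := ℝ)]
    have hS := sinZeta_one_sub (θ : UnitAddCircle) (s := 1) hne
    have hpref : (2 * (2 * (π : ℂ)) ^ (-(1 : ℂ)) * Complex.Gamma 1
        * Complex.sin ((π : ℂ) * 1 / 2)) = ((π⁻¹ : ℝ) : ℂ) := by
      rw [show (-(1 : ℂ)) = ((-1 : ℤ) : ℂ) by norm_num, cpow_intCast, Complex.Gamma_one,
        show ((π : ℂ) * 1 / 2) = ((π / 2 : ℝ) : ℂ) by push_cast; ring,
        ← Complex.ofReal_sin, Real.sin_pi_div_two]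
      have hπ : (π : ℝ) ≠ 0 := Real.pi_ne_zero
      push_cast
      field_simp
    have him : (sinZeta (θ : UnitAddCircle) 0).im = 0 := by
      have h0 : (1 : ℂ) - 1 = 0 := by ring
      rw [h0] at hS
      rw [hS, hpref]
      simp [Complex.mul_im, aux_odd_im_one hθ0 hθ1]
    intro h
    rw [show -((0 : ℕ) : ℂ) = 0 by norm_num, expZeta, cosZeta_apply_zero] at h
    have := congrArg Complex.re h
    simp only [add_re, mul_re, I_re, I_im, zero_re, zero_mul, one_mul, zero_sub, him,
      neg_zero] at this
    norm_num at this
  · -- the case `k ≥ 1`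
    have hm : 2 ≤ k + 1 := by omega
    obtain ⟨e, hE, he⟩ := aux_even_pos hθ0 hθ1 hm
    obtain ⟨o, hO, ho⟩ := aux_odd_ne hθ0 hθ1 hθhalf hm
    have hne : ∀ n : ℕ, (((k + 1 : ℕ) : ℂ)) ≠ 1 - (n : ℂ) := by
      intro n h
      have := congrArg Complex.re h
      simp only [natCast_re, sub_re, one_re] at this
      have hn : (0 : ℝ) ≤ (n : ℝ) := n.cast_nonneg
      have hk' : (2 : ℝ) ≤ ((k + 1 : ℕ) : ℝ) := by exact_mod_cast hm
      linarith
    have hne' : ∀ n : ℕ, (((k + 1 : ℕ) : ℂ)) ≠ -(n : ℂ) := by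
      intro n h
      have := congrArg Complex.re h
      simp only [natCast_re, neg_re] at this
      have hn : (0 : ℝ) ≤ (n : ℝ) := n.cast_nonneg
      have hk' : (2 : ℝ) ≤ ((k + 1 : ℕ) : ℝ) := by exact_mod_cast hm
      linarith
    have hcos := cosZeta_one_sub (θ : UnitAddCircle) (s := ((k + 1 : ℕ) : ℂ)) hne
    have hsin := sinZeta_one_sub (θ : UnitAddCircle) (s := ((k + 1 : ℕ) : ℂ)) hne'
    rw [show -(k : ℂ) = 1 - ((k + 1 : ℕ) : ℂ) by push_cast; ring, expZeta, hcos, hsin, hE, hO]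
    have hcosr : Complex.cos ((π : ℂ) * ((k + 1 : ℕ) : ℂ) / 2)
        = ((Real.cos (π * (k + 1 : ℕ) / 2) : ℝ) : ℂ) := by
      rw [show ((π : ℂ) * ((k + 1 : ℕ) : ℂ) / 2) = ((π * (k + 1 : ℕ) / 2 : ℝ) : ℂ) by
        push_cast; ring, ← Complex.ofReal_cos]
    have hsinr : Complex.sin ((π : ℂ) * ((k + 1 : ℕ) : ℂ) / 2)
        = ((Real.sin (π * (k + 1 : ℕ) / 2) : ℝ) : ℂ) := by
      rw [show ((π : ℂ) * ((k + 1 : ℕ) : ℂ) / 2) = ((π * (k + 1 : ℕ) / 2 : ℝ) : ℂ) by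
        push_cast; ring, ← Complex.ofReal_sin]
    have key : 2 * (2 * (π : ℂ)) ^ (-(((k + 1 : ℕ) : ℂ))) * Complex.Gamma ((k + 1 : ℕ) : ℂ)
          * Complex.cos ((π : ℂ) * ((k + 1 : ℕ) : ℂ) / 2) * (e : ℂ)
        + I * (2 * (2 * (π : ℂ)) ^ (-(((k + 1 : ℕ) : ℂ))) * Complex.Gamma ((k + 1 : ℕ) : ℂ)
          * Complex.sin ((π : ℂ) * ((k + 1 : ℕ) : ℂ) / 2) * (o : ℂ))
        = (2 * (2 * (π : ℂ)) ^ (-(((k + 1 : ℕ) : ℂ))) * Complex.Gamma ((k + 1 : ℕ) : ℂ))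
          * (((Real.cos (π * (k + 1 : ℕ) / 2) * e : ℝ) : ℂ)
            + I * ((Real.sin (π * (k + 1 : ℕ) / 2) * o : ℝ) : ℂ)) := by
      rw [hcosr, hsinr]
      push_cast
      ring
    rw [key]
    refine mul_ne_zero (mul_ne_zero (mul_ne_zero two_ne_zero ?_) ?_) ?_
    · rw [Complex.cpow_def_of_ne_zero (by
        simp [Real.pi_ne_zero] : (2 * (π : ℂ)) ≠ 0)]
      exact Complex.exp_ne_zero _
    · rw [show (((k + 1 : ℕ)) : ℂ) = (k : ℂ) + 1 by push_cast; ring,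
        Complex.Gamma_nat_eq_factorial]
      exact_mod_cast k.factorial_ne_zero
    · intro h
      have hre := congrArg Complex.re h
      have him := congrArg Complex.im h
      simp only [add_re, add_im, mul_re, mul_im, I_re, I_im, ofReal_re, ofReal_im, zero_re,
        zero_im, zero_mul, one_mul, mul_zero, zero_sub, zero_add, sub_zero, add_zero,
        neg_eq_zero, neg_zero] at hre him
      have hc : Real.cos (π * (k + 1 : ℕ) / 2) = 0 := by
        rcases mul_eq_zero.mp hre with h' | h'
        · exact h'
        · exact absurd h' (ne_of_gt he)
      have hs : Real.sin (π * (k + 1 : ℕ) / 2) = 0 := by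
        rcases mul_eq_zero.mp him with h' | h'
        · exact h'
        · exact absurd h' ho
      have := Real.sin_sq_add_cos_sq (π * (k + 1 : ℕ) / 2)
      rw [hc, hs] at this
      norm_num at this
end

section
/- Let θ be a real number with 0 < θ < 1 and let k ≥ 1 be an integer. Then the series ∑_{n∈ℤ} (2πi(n−θ))^{−(k+1)} converges absolutely and the value of the analytic continuation of the Lerch zeta-function φ(s, e^{2πiθ}) at s = −k satisfies φ(−k, e^{2πiθ}) = k! · ∑_{n∈ℤ} (2πi(n−θ))^{−(k+1)}. In Mathlib notation: expZeta θ (−k) = k! · ∑_{n∈ℤ} (2πi(n−θ))^{−(k+1)}. (The residue identity established in the proof of Lemma 2.5, expressing φ(−k,ξ) as a sum over lattice poles.) -/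
open Complex HurwitzZeta Real

private lemma zpow_neg_nat_aux (k : ℕ) (x : ℂ) :
    x ^ (-((k : ℤ) + 1)) = (x ^ (k + 1))⁻¹ := by
  rw [show -((k : ℤ) + 1) = -((k + 1 : ℕ) : ℤ) by push_cast; ring, zpow_neg, zpow_natCast]

private lemma cpow_nat_aux (k : ℕ) (x : ℂ) :
    x ^ ((k : ℂ) + 1) = x ^ (k + 1) := by
  rw [show ((k : ℂ) + 1) = ((k + 1 : ℕ) : ℂ) by push_cast; ring, cpow_natCast]

/-- The residue identity from the proof of Lemma 2.5: for `0 < θ < 1` and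
`k ≥ 1`, the series `∑_{n ∈ ℤ} (2πi(n-θ))^{-(k+1)}` converges absolutely and
`φ(-k, e^{2πiθ}) = k! · ∑_{n ∈ ℤ} (2πi(n-θ))^{-(k+1)}`. -/
theorem expZeta_neg_nat_eq_tsum (θ : ℝ) (hθ0 : 0 < θ) (hθ1 : θ < 1)
    (k : ℕ) (hk : 1 ≤ k) :
    Summable (fun n : ℤ =>
      ‖(2 * (π : ℂ) * I * ((n : ℂ) - (θ : ℂ))) ^ (-((k : ℤ) + 1))‖) ∧
    expZeta (θ : UnitAddCircle) (-(k : ℂ)) =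
      (k.factorial : ℂ) *
        ∑' n : ℤ, (2 * (π : ℂ) * I * ((n : ℂ) - (θ : ℂ))) ^ (-((k : ℤ) + 1)) := by
  have hre : 1 < ((k : ℂ) + 1).re := by
    simp only [add_re, natCast_re, one_re]
    have : (1 : ℝ) ≤ (k : ℝ) := by exact_mod_cast hk
    linarith
  set f : ℤ → ℂ := fun n : ℤ =>
    (2 * (π : ℂ) * I * ((n : ℂ) - (θ : ℂ))) ^ (-((k : ℤ) + 1)) with hf
  set Cp : ℂ := ((2 * (π : ℂ) * I) ^ (k + 1))⁻¹ with hCp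
  set Cm : ℂ := (-1 : ℂ) ^ (k + 1) * Cp with hCm
  -- Hurwitz zeta Dirichlet series at (k:ℂ)+1
  have H0 := hasSum_hurwitzZeta_of_one_lt_re (a := θ) ⟨hθ0.le, hθ1.le⟩ hre
  have H1 := hasSum_hurwitzZeta_of_one_lt_re (a := 1 - θ) ⟨by linarith, by linarith⟩ hre
  -- positive side
  have Hpos : HasSum (fun n : ℕ => f ((n : ℤ) + 1))
      (Cp * hurwitzZeta ((1 - θ : ℝ) : UnitAddCircle) ((k : ℂ) + 1)) := by
    refine (H1.mul_left Cp).congr_fun fun n => ?_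
    show f ((n : ℤ) + 1) = Cp * (1 / ((n : ℂ) + ((1 - θ : ℝ) : ℂ)) ^ ((k : ℂ) + 1))
    rw [hf]
    simp only
    rw [one_div, cpow_nat_aux, zpow_neg_nat_aux, mul_pow, mul_inv, hCp]
    congr 2
    push_cast
    ring
  -- nonpositive side (including n = 0)
  have Hneg : HasSum (fun n : ℕ => f (-(n : ℤ)))
      (Cm * hurwitzZeta ((θ : ℝ) : UnitAddCircle) ((k : ℂ) + 1)) := by
    refine (H0.mul_left Cm).congr_fun fun n => ?_
    show f (-(n : ℤ)) = Cm * (1 / ((n : ℂ) + (θ : ℂ)) ^ ((k : ℂ) + 1))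
    rw [hf]
    simp only
    rw [one_div, cpow_nat_aux, zpow_neg_nat_aux, hCm, hCp]
    rw [show (2 * (π : ℂ) * I * (((-(n : ℤ) : ℤ) : ℂ) - (θ : ℂ)))
        = (-1) * (2 * (π : ℂ) * I) * (((n : ℂ) + (θ : ℂ))) by push_cast; ring]
    rw [mul_pow, mul_pow, mul_inv, mul_inv]
    rw [show ((-1 : ℂ) ^ (k + 1))⁻¹ = (-1 : ℂ) ^ (k + 1) by
      rw [← inv_pow, inv_neg, inv_one]]
  have h00 : f (-((0 : ℕ) : ℤ)) = f 0 := by norm_num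
  have Hneg' : HasSum (fun n : ℕ => f (-((n : ℤ) + 1)))
      (Cm * hurwitzZeta ((θ : ℝ) : UnitAddCircle) ((k : ℂ) + 1) - f 0) := by
    have h2 := (hasSum_nat_add_iff' (f := fun n : ℕ => f (-(n : ℤ))) 1).mpr Hneg
    simp only [Finset.sum_range_one, h00] at h2
    refine h2.congr_fun fun n => ?_
    push_cast
    ring_nf
  have Hf : HasSum f (Cp * hurwitzZeta ((1 - θ : ℝ) : UnitAddCircle) ((k : ℂ) + 1) +
      f 0 + (Cm * hurwitzZeta ((θ : ℝ) : UnitAddCircle) ((k : ℂ) + 1) - f 0)) :=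
    Hpos.of_add_one_of_neg_add_one Hneg'
  constructor
  · exact (summable_norm_iff.mpr Hf.summable).congr
      fun n => congrArg Norm.norm (congrFun hf n)
  · -- value computation
    have htsum : (∑' n : ℤ, f n)
        = Cp * hurwitzZeta ((1 - θ : ℝ) : UnitAddCircle) ((k : ℂ) + 1) +
          Cm * hurwitzZeta ((θ : ℝ) : UnitAddCircle) ((k : ℂ) + 1) := by
      rw [Hf.tsum_eq]; ring
    have hcoe : ((1 - θ : ℝ) : UnitAddCircle) = -((θ : ℝ) : UnitAddCircle) := by
      simp [sub_eq_add_neg]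
    have hs : ∀ n : ℕ, ((k : ℂ) + 1) ≠ 1 - (n : ℂ) := by
      intro n h
      have h' := congrArg Complex.re h
      simp only [add_re, natCast_re, one_re, sub_re] at h'
      have hk' : (1 : ℝ) ≤ (k : ℝ) := by exact_mod_cast hk
      have hn : (0 : ℝ) ≤ (n : ℝ) := n.cast_nonneg
      linarith
    have hFE := expZeta_one_sub ((θ : ℝ) : UnitAddCircle) hs
    rw [show (1 : ℂ) - ((k : ℂ) + 1) = -(k : ℂ) by ring] at hFE
    rw [hFE, htsum, ← hcoe,
      show Complex.Gamma ((k : ℂ) + 1) = (k.factorial : ℂ) by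
        rw [Complex.Gamma_nat_eq_factorial]]
    -- now pure constant algebra
    have hkey : (2 * (π : ℂ) * I) ^ (k + 1)
        = (2 * (π : ℂ)) ^ ((k : ℂ) + 1) * cexp (π * I * ((k : ℂ) + 1) / 2) := by
      rw [mul_pow, cpow_nat_aux]
      congr 1
      rw [show (π * I * ((k : ℂ) + 1) / 2) = ((k + 1 : ℕ) : ℂ) * (π / 2 * I) by
        push_cast; ring, Complex.exp_nat_mul, Complex.exp_mul_I]
      simp
    have hexp0 : cexp (π * I * ((k : ℂ) + 1) / 2) ≠ 0 := Complex.exp_ne_zero _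
    have hsq : cexp (π * I * ((k : ℂ) + 1) / 2) * cexp (π * I * ((k : ℂ) + 1) / 2)
        = (-1 : ℂ) ^ (k + 1) := by
      rw [← Complex.exp_add,
        show (π * I * ((k : ℂ) + 1) / 2 + π * I * ((k : ℂ) + 1) / 2)
          = ((k + 1 : ℕ) : ℂ) * (π * I) by push_cast; ring,
        Complex.exp_nat_mul, Complex.exp_pi_mul_I]
    have hflip : cexp (π * I * ((k : ℂ) + 1) / 2)
        = (-1 : ℂ) ^ (k + 1) * cexp (-π * I * ((k : ℂ) + 1) / 2) := by
      rw [show (-π * I * ((k : ℂ) + 1) / 2) = -(π * I * ((k : ℂ) + 1) / 2) by ring,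
        Complex.exp_neg, ← hsq, mul_inv_cancel_right₀ hexp0]
    have hc1 : ((2 : ℂ) * π) ^ (-((k : ℂ) + 1)) * cexp (-π * I * ((k : ℂ) + 1) / 2) = Cp := by
      rw [hCp, hkey, cpow_neg, show (-π * I * ((k : ℂ) + 1) / 2)
        = -(π * I * ((k : ℂ) + 1) / 2) by ring, Complex.exp_neg, mul_inv]
    have hc2 : ((2 : ℂ) * π) ^ (-((k : ℂ) + 1)) * cexp (π * I * ((k : ℂ) + 1) / 2) = Cm := by
      rw [hflip, hCm, ← hc1]; ring
    rw [← hc1, ← hc2]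
    ring
end

section
/- Let θ be a real number with 0 < θ < 1 and θ ≠ 1/2, and let k ≥ 1 be an integer. Then ∑_{n∈ℤ} 1/(n−θ)^{k+1} ≠ 0 (the series converges absolutely since k+1 ≥ 2, and each term 1/(n−θ)^{k+1} is a well-defined real number since θ ∉ ℤ). (The key nonvanishing claim (1.10) in the proof of Lemma 2.5: for odd k the sum is positive, and for even k the sum is nonzero because consecutive paired terms 1/(n+1−θ)^{k+1} − 1/(n+θ)^{k+1} all have the same sign.) -/
set_option maxHeartbeats 1000000 in
/-- The key nonvanishing claim (1.10) in the proof of Lemma 2.5: for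
`0 < θ < 1`, `θ ≠ 1/2` and `k ≥ 1`, the absolutely convergent series
`∑_{n ∈ ℤ} (n - θ)^{-(k+1)}` is nonzero. -/
theorem tsum_zpow_sub_ne_zero (θ : ℝ) (hθ0 : 0 < θ) (hθ1 : θ < 1)
    (hθhalf : θ ≠ 1 / 2) (k : ℕ) (hk : 1 ≤ k) :
    (∑' n : ℤ, ((n : ℝ) - θ) ^ (-((k : ℤ) + 1))) ≠ 0 := by
  set m : ℕ := k + 1 with hm
  have hmE : -((k : ℤ) + 1) = -(m : ℤ) := by push_cast [hm]; ring
  set f : ℤ → ℝ := fun z => ((z : ℝ) - θ) ^ (-((k : ℤ) + 1)) with hf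
  have hne : ∀ z : ℤ, (z : ℝ) - θ ≠ 0 := by
    intro z hz
    have hz' : (z : ℝ) = θ := by linarith
    have h1 : (0 : ℝ) < (z : ℝ) := by rw [hz']; exact hθ0
    have h2 : (z : ℝ) < 1 := by rw [hz']; exact hθ1
    have h1' : (0 : ℤ) < z := by exact_mod_cast h1
    have h2' : z < 1 := by exact_mod_cast h2
    omega
  -- summability
  have hsum : Summable f := by
    have h1 : Summable (fun n : ℤ => 1 / |(n : ℝ) + (-θ)| ^ (m : ℝ)) := by
      rw [Real.summable_one_div_int_add_rpow]
      exact_mod_cast by omega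
    apply Summable.of_norm
    refine h1.congr fun z => ?_
    show 1 / |(z : ℝ) + (-θ)| ^ (m : ℝ) = ‖((z : ℝ) - θ) ^ (-((k : ℤ) + 1))‖
    rw [Real.norm_eq_abs, hmE, zpow_neg, abs_inv, zpow_natCast, abs_pow,
      Real.rpow_natCast, one_div, ← sub_eq_add_neg]
  -- reindex: shift by 1 then split into ℕ and negatives
  have hshift : Summable (fun z : ℤ => f (z + 1)) :=
    ((Equiv.addRight (1 : ℤ)).summable_iff).2 hsum
  have key : ∑' z : ℤ, f z = ∑' n : ℕ, (f ((n : ℤ) + 1) + f (-(n : ℤ))) := by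
    rw [← (Equiv.addRight (1 : ℤ)).tsum_eq f]
    simp only [Equiv.coe_addRight]
    rw [← tsum_nat_add_neg_add_one hshift]
    congr 1
    funext n
    congr 2
    ring
  have hpairsum : Summable (fun n : ℕ => f ((n : ℤ) + 1) + f (-(n : ℤ))) := by
    have := hshift.nat_add_neg_add_one
    refine this.congr fun n => ?_
    congr 2
    ring
  -- basic positivity of the two bases
  have ha : ∀ n : ℕ, (0 : ℝ) < (n : ℝ) + 1 - θ := fun n => by
    have : (0 : ℝ) ≤ (n : ℝ) := Nat.cast_nonneg n
    linarith
  have hb : ∀ n : ℕ, (0 : ℝ) < (n : ℝ) + θ := fun n => by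
    have : (0 : ℝ) ≤ (n : ℝ) := Nat.cast_nonneg n
    linarith
  have hfa : ∀ n : ℕ, f ((n : ℤ) + 1) = ((n : ℝ) + 1 - θ) ^ (-(m : ℤ)) := by
    intro n; rw [hf, hmE]; push_cast; ring_nf
  have hfb : ∀ n : ℕ, f (-(n : ℤ)) = (-((n : ℝ) + θ)) ^ (-(m : ℤ)) := by
    intro n; rw [hf, hmE]; push_cast; ring_nf
  -- monotonicity for negative exponents
  have hmono : ∀ a b : ℝ, 0 < a → a < b → b ^ (-(m : ℤ)) < a ^ (-(m : ℤ)) := by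
    intro a b ha0 hab
    rw [zpow_neg, zpow_neg, zpow_natCast, zpow_natCast]
    apply inv_strictAnti₀ (pow_pos ha0 m)
    exact pow_lt_pow_left₀ hab ha0.le (by omega)
  rcases Nat.even_or_odd m with hpar | hpar
  · -- m even: every term of the paired series is positive
    have hpos : ∀ n : ℕ, 0 < f ((n : ℤ) + 1) + f (-(n : ℤ)) := by
      intro n
      have h1 : 0 < f ((n : ℤ) + 1) := by
        rw [hfa n]
        exact Even.zpow_pos (((Int.even_coe_nat m).2 hpar).neg) (ha n).ne'
      have h2 : 0 < f (-(n : ℤ)) := by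
        rw [hfb n]
        exact Even.zpow_pos (((Int.even_coe_nat m).2 hpar).neg) (by nlinarith [hb n])
      linarith
    have : 0 < ∑' n : ℕ, (f ((n : ℤ) + 1) + f (-(n : ℤ))) :=
      Summable.tsum_pos hpairsum (fun n => (hpos n).le) 0 (hpos 0)
    rw [show (∑' n : ℤ, ((n : ℝ) - θ) ^ (-((k : ℤ) + 1))) = ∑' z : ℤ, f z from rfl, key]
    exact this.ne'
  · -- m odd
    have hodd : Odd (-(m : ℤ)) := (((Int.odd_coe_nat m).2 hpar)).neg
    have hterm : ∀ n : ℕ, f ((n : ℤ) + 1) + f (-(n : ℤ))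
        = ((n : ℝ) + 1 - θ) ^ (-(m : ℤ)) - ((n : ℝ) + θ) ^ (-(m : ℤ)) := by
      intro n
      rw [hfa n, hfb n, hodd.neg_zpow]
      ring
    rcases lt_or_gt_of_ne hθhalf with hθ | hθ
    · -- θ < 1/2 : each paired term is negative
      have hneg : ∀ n : ℕ, f ((n : ℤ) + 1) + f (-(n : ℤ)) < 0 := by
        intro n
        rw [hterm n]
        have := hmono ((n : ℝ) + θ) ((n : ℝ) + 1 - θ) (hb n) (by linarith)
        linarith
      have : 0 < ∑' n : ℕ, -(f ((n : ℤ) + 1) + f (-(n : ℤ))) :=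
        Summable.tsum_pos hpairsum.neg (fun n => by linarith [hneg n]) 0 (by linarith [hneg 0])
      rw [tsum_neg] at this
      rw [show (∑' n : ℤ, ((n : ℝ) - θ) ^ (-((k : ℤ) + 1))) = ∑' z : ℤ, f z from rfl, key]
      intro h
      rw [h] at this
      simp at this
    · -- θ > 1/2 : each paired term is positive
      have hpos : ∀ n : ℕ, 0 < f ((n : ℤ) + 1) + f (-(n : ℤ)) := by
        intro n
        rw [hterm n]
        have := hmono ((n : ℝ) + 1 - θ) ((n : ℝ) + θ) (ha n) (by linarith)
        linarith
      have : 0 < ∑' n : ℕ, (f ((n : ℤ) + 1) + f (-(n : ℤ))) :=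
        Summable.tsum_pos hpairsum (fun n => (hpos n).le) 0 (hpos 0)
      rw [show (∑' n : ℤ, ((n : ℝ) - θ) ^ (-((k : ℤ) + 1))) = ∑' z : ℤ, f z from rfl, key]
      exact this.ne'
end

section
/- Let y ∈ ℂ with e^y ≠ 1. Then, as the real parameter c tends to 1 (through real values c ≠ 1), the expression (1/(1−c)) · ( 1/(e^y − 1) − c/(e^{cy} − 1) ) tends to 1/(e^y − 1) − y·e^y/(e^y − 1)^2. That is, lim_{c→1, c∈ℝ∖{1}} F_{c,1}(y,1) = F_{1,1}(y,1). (Lemma 3.5.) -/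
/-! The expression is the difference quotient of `c ↦ c / (e^{cy} - 1)` at `c = 1`, so its limit
is the derivative there, computed by the quotient rule. -/

open Complex Filter Topology

theorem HasDerivAt.tendsto_mul_sub_div_sub {f : ℝ → ℂ} {f' : ℂ} {a : ℝ} (hf : HasDerivAt f f' a) :
    Tendsto (fun c : ℝ => (1 / ((a : ℂ) - c)) * (f a - f c)) (𝓝[≠] a) (𝓝 f') := by
  refine (hasDerivAt_iff_tendsto_slope.mp hf).congr' ?_
  filter_upwards [self_mem_nhdsWithin] with c hc
  have hc' : (c : ℂ) - a ≠ 0 := sub_ne_zero.mpr (by exact_mod_cast hc)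
  rw [slope_def_module, Complex.real_smul, Complex.ofReal_inv, Complex.ofReal_sub, ← neg_sub (c : ℂ),
    ← neg_sub (f c)]
  field_simp

theorem hasDerivAt_div_exp_mul_sub_one {y z : ℂ} (hz : exp (z * y) ≠ 1) :
    HasDerivAt (fun w : ℂ => w / (exp (w * y) - 1))
      (1 / (exp (z * y) - 1) - z * y * exp (z * y) / (exp (z * y) - 1) ^ 2) z := by
  have hne : exp (z * y) - 1 ≠ 0 := sub_ne_zero.mpr hz
  have hden : HasDerivAt (fun w : ℂ => exp (w * y) - 1) (exp (z * y) * y) z := by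
    simpa using ((hasDerivAt_mul_const y).cexp).sub_const 1
  exact ((hasDerivAt_id' z).div hden hne).congr_deriv (by field_simp)

/-- Lemma 3.5: for `y ∈ ℂ` with `e^y ≠ 1`, as the real parameter `c → 1`
(`c ≠ 1`), `(1/(1-c)) (1/(e^y - 1) - c/(e^{cy} - 1))` tends to
`1/(e^y - 1) - y e^y/(e^y - 1)^2`. -/
theorem tendsto_F_c_one (y : ℂ) (hy : Complex.exp y ≠ 1) :
    Tendsto
      (fun c : ℝ =>
        (1 / (1 - (c : ℂ))) *
          (1 / (Complex.exp y - 1) - (c : ℂ) / (Complex.exp ((c : ℂ) * y) - 1)))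
      (𝓝[≠] (1 : ℝ))
      (𝓝 (1 / (Complex.exp y - 1) -
        y * Complex.exp y / (Complex.exp y - 1) ^ 2)) := by
  have hderiv :=
    (hasDerivAt_div_exp_mul_sub_one (z := ((1 : ℝ) : ℂ)) (by simpa using hy)).comp_ofReal
  simpa using hderiv.tendsto_mul_sub_div_sub
end

section
/- Let 0 < θ < π/2 and let ξ ∈ ℂ with |ξ| ≤ 1 and ξ ≠ 1. Then there exist real numbers ε > 0 and A > 0 such that for every y ∈ ℂ with either |y| ≤ ε or |arg y| ≤ θ, one has e^{Re(y)/2} ≤ A · |e^y − ξ| (equivalently |1/(e^y − ξ)| ≤ A·e^{−Re(y)/2}, and in particular e^y ≠ ξ on this set). (Lemma 3.6, case δ = 0.) -/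
open Complex Real

/-!
Put `c = ‖1 - ξ‖ > 0`. Near `0`, `‖e^y - 1‖ ≤ 2‖y‖` keeps `e^y` at distance `≥ c/2` from `ξ`;
in the sector away from `0`, `Re y ≥ ε cos θ > 0`, so `‖e^y - ξ‖ ≥ e^{Re y} - 1 ≥ ε cos θ`.
Thus `‖e^y - ξ‖` is bounded below by some `δ > 0` on the whole region, and a lower bound
`δ` turns into `e^{Re y / 2} ≤ A ‖e^y - ξ‖` because `‖e^y - ξ‖ ≥ e^{Re y} - 1` grows like the
square of `e^{Re y / 2}`.
-/

namespace Complex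

lemma norm_mul_cos_le_re_of_abs_arg_le {y : ℂ} {θ : ℝ} (hθ : θ ≤ π) (hy : |y.arg| ≤ θ) :
    ‖y‖ * Real.cos θ ≤ y.re := by
  have hcos : Real.cos θ ≤ Real.cos y.arg := by
    rw [← Real.cos_abs y.arg]
    exact Real.cos_le_cos_of_nonneg_of_le_pi (abs_nonneg _) hθ hy
  calc ‖y‖ * Real.cos θ ≤ ‖y‖ * Real.cos y.arg := mul_le_mul_of_nonneg_left hcos (norm_nonneg y)
    _ = y.re := norm_mul_cos_arg y

lemma norm_one_sub_sub_two_mul_norm_le_norm_exp_sub {y : ℂ} (ξ : ℂ) (hy : ‖y‖ ≤ 1) :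
    ‖1 - ξ‖ - 2 * ‖y‖ ≤ ‖exp y - ξ‖ := by
  have hsplit : 1 - ξ = (exp y - ξ) - (exp y - 1) := by ring
  have := norm_exp_sub_one_le hy
  have := norm_sub_le (exp y - ξ) (exp y - 1)
  rw [← hsplit] at this
  linarith

lemma exp_re_sub_one_le_norm_exp_sub {ξ : ℂ} (hξ : ‖ξ‖ ≤ 1) (y : ℂ) :
    Real.exp y.re - 1 ≤ ‖exp y - ξ‖ := by
  have := norm_sub_norm_le (exp y) ξ
  rw [norm_exp] at this
  linarith

lemma re_le_norm_exp_sub {ξ : ℂ} (hξ : ‖ξ‖ ≤ 1) (y : ℂ) : y.re ≤ ‖exp y - ξ‖ := by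
  linarith [Real.add_one_le_exp y.re, exp_re_sub_one_le_norm_exp_sub hξ y]

/-- With `t = e^{Re y / 2}` we have `‖e^y - ξ‖ ≥ t² - 1`, which is `≥ t` once `t ≥ 2`. -/
lemma exp_half_re_le_mul_norm_exp_sub {ξ : ℂ} (hξ : ‖ξ‖ ≤ 1) {δ : ℝ} (hδ : 0 < δ) {y : ℂ}
    (hy : δ ≤ ‖exp y - ξ‖) : Real.exp (y.re / 2) ≤ (2 / δ + 1) * ‖exp y - ξ‖ := by
  set t := Real.exp (y.re / 2)
  have hsq : t ^ 2 - 1 ≤ ‖exp y - ξ‖ := by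
    rw [← Real.exp_nat_mul, Nat.cast_ofNat, mul_div_cancel₀ _ two_ne_zero]
    exact exp_re_sub_one_le_norm_exp_sub hξ y
  have hnorm : 0 ≤ ‖exp y - ξ‖ := norm_nonneg _
  rcases le_or_gt t 2 with ht | ht
  · have : 2 / δ * δ ≤ 2 / δ * ‖exp y - ξ‖ := by gcongr
    calc t ≤ 2 / δ * δ := by rwa [div_mul_cancel₀ _ hδ.ne']
      _ ≤ (2 / δ + 1) * ‖exp y - ξ‖ := by linarith
  · have : t ≤ ‖exp y - ξ‖ := by nlinarith
    have : 0 ≤ 2 / δ * ‖exp y - ξ‖ := by positivity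
    linarith

end Complex

/-- Lemma 3.6, case `δ = 0`: for `0 < θ < π/2` and `ξ ∈ ℂ` with `|ξ| ≤ 1`,
`ξ ≠ 1`, there are `ε > 0` and `A > 0` such that
`e^{Re(y)/2} ≤ A |e^y - ξ|` for all `y` in the closed disc of radius `ε`
around `0` and in the closed sector `|arg y| ≤ θ`. -/
theorem exists_bound_inv_exp_sub (θ : ℝ) (hθ0 : 0 < θ) (hθ : θ < π / 2)
    (ξ : ℂ) (hξ : ‖ξ‖ ≤ 1) (hξ1 : ξ ≠ 1) :
    ∃ ε > (0 : ℝ), ∃ A > (0 : ℝ), ∀ y : ℂ,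
      (‖y‖ ≤ ε ∨ |y.arg| ≤ θ) →
      Real.exp (y.re / 2) ≤ A * ‖Complex.exp y - ξ‖ := by
  set c := ‖1 - ξ‖
  have hc : 0 < c := norm_pos_iff.2 (sub_ne_zero.2 (Ne.symm hξ1))
  have hcos : 0 < Real.cos θ := Real.cos_pos_of_mem_Ioo ⟨by linarith [pi_pos], hθ⟩
  set ε := min 1 (c / 4)
  have hε : 0 < ε := lt_min one_pos (by positivity)
  set δ := min (c / 2) (ε * Real.cos θ)
  have hδ : 0 < δ := lt_min (by positivity) (by positivity)
  refine ⟨ε, hε, 2 / δ + 1, by positivity, fun y hy => exp_half_re_le_mul_norm_exp_sub hξ hδ ?_⟩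
  rcases le_or_gt ‖y‖ ε with hdisc | hfar
  · have := norm_one_sub_sub_two_mul_norm_le_norm_exp_sub ξ (hdisc.trans (min_le_left _ _))
    have : ‖y‖ ≤ c / 4 := hdisc.trans (min_le_right _ _)
    linarith [min_le_left (c / 2) (ε * Real.cos θ)]
  · have hsec := norm_mul_cos_le_re_of_abs_arg_le (by linarith [pi_pos]) (hy.resolve_left hfar.not_ge)
    calc δ ≤ ε * Real.cos θ := min_le_right _ _
      _ ≤ ‖y‖ * Real.cos θ := by gcongr
      _ ≤ ‖exp y - ξ‖ := hsec.trans (re_le_norm_exp_sub hξ y)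
end

section
/- Let s_1, s_2, s_3 ∈ ℂ with Re s_1 > 3, Re s_2 > 3, Re s_3 > 3, and write Z(a,b,c) = ∑_{m≥1}∑_{n≥1} m^{−a} n^{−b} (m+n)^{−c} (all the series below converge absolutely). Then (s_2−1)(s_1−s_3)·Z(s_1,s_2,s_3) − s_3(2−s_1−s_2+s_3)·Z(s_1,s_2−1,s_3+1) + s_3(s_3+1)·Z(s_1,s_2−2,s_3+2) + s_1(s_2−s_3−1)·Z(s_1+1,s_2−1,s_3) − s_1(s_2−1)·Z(s_1+1,s_2,s_3−1) + s_1 s_3 · Z(s_1+1,s_2−2,s_3+1) + (s_2−1)s_3 · Z(s_1−1,s_2,s_3+1) + s_3(s_3+1)·Z(s_1−1,s_2−1,s_3+2) = 0. (Identity (4.5) for the Mordell–Tornheim double zeta-function, arising from the coefficient of a in the generating function of Example 4.2.) -/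
/-!
Every summand of the eight series has the form `x ^ (-a) * y ^ (-b) * (x + y) ^ (-c)` with
`x = m`, `y = n`, and pulling out `x ^ (-(s₁ + 1)) * y ^ (-s₂) * (x + y) ^ (-(s₃ + 2))` leaves a
cubic form in `x`, `y`, `x + y` which vanishes identically once `x + y` is expanded. So the
identity already holds summand by summand, and since all eight series converge absolutely
(the real parts of the shifted arguments stay above `1`, `1`, `0`) it survives summation.
-/

open Complex

/-- The Mordell–Tornheim double zeta-function
`ζ_{MT,2}(a,b,c) = ∑_{m,n ≥ 1} m^{-a} n^{-b} (m+n)^{-c}`. -/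
noncomputable def mordellTornheim2 (a b c : ℂ) : ℂ :=
  ∑' p : ℕ × ℕ,
    ((p.1 : ℂ) + 1) ^ (-a) * ((p.2 : ℂ) + 1) ^ (-b) *
      ((p.1 : ℂ) + (p.2 : ℂ) + 2) ^ (-c)

noncomputable def mordellTornheim2Term (a b c x y : ℂ) : ℂ :=
  x ^ (-a) * y ^ (-b) * (x + y) ^ (-c)

lemma cpow_neg_eq_cpow_neg_mul_pow {w : ℂ} (hw : w ≠ 0) (t u : ℂ) (n : ℕ) (h : t = u + n) :
    w ^ (-u) = w ^ (-t) * w ^ n := by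
  rw [← cpow_natCast, ← cpow_add _ _ hw, h, neg_add, neg_add_cancel_right]

lemma mordellTornheim2Term_identity_a {x y : ℂ} (hx : x ≠ 0) (hy : y ≠ 0) (hxy : x + y ≠ 0)
    (s₁ s₂ s₃ : ℂ) :
    (s₂ - 1) * (s₁ - s₃) * mordellTornheim2Term s₁ s₂ s₃ x y
      - s₃ * (2 - s₁ - s₂ + s₃) * mordellTornheim2Term s₁ (s₂ - 1) (s₃ + 1) x y
      + s₃ * (s₃ + 1) * mordellTornheim2Term s₁ (s₂ - 2) (s₃ + 2) x y
      + s₁ * (s₂ - s₃ - 1) * mordellTornheim2Term (s₁ + 1) (s₂ - 1) s₃ x y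
      - s₁ * (s₂ - 1) * mordellTornheim2Term (s₁ + 1) s₂ (s₃ - 1) x y
      + s₁ * s₃ * mordellTornheim2Term (s₁ + 1) (s₂ - 2) (s₃ + 1) x y
      + (s₂ - 1) * s₃ * mordellTornheim2Term (s₁ - 1) s₂ (s₃ + 1) x y
      + s₃ * (s₃ + 1) * mordellTornheim2Term (s₁ - 1) (s₂ - 1) (s₃ + 2) x y = 0 := by
  simp only [mordellTornheim2Term]
  rw [cpow_neg_eq_cpow_neg_mul_pow hx (s₁ + 1) s₁ 1 (by push_cast; ring),
    cpow_neg_eq_cpow_neg_mul_pow hx (s₁ + 1) (s₁ - 1) 2 (by push_cast; ring),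
    cpow_neg_eq_cpow_neg_mul_pow hy s₂ (s₂ - 1) 1 (by push_cast; ring),
    cpow_neg_eq_cpow_neg_mul_pow hy s₂ (s₂ - 2) 2 (by push_cast; ring),
    cpow_neg_eq_cpow_neg_mul_pow hxy (s₃ + 2) s₃ 2 (by push_cast; ring),
    cpow_neg_eq_cpow_neg_mul_pow hxy (s₃ + 2) (s₃ + 1) 1 (by push_cast; ring),
    cpow_neg_eq_cpow_neg_mul_pow hxy (s₃ + 2) (s₃ - 1) 3 (by push_cast; ring)]
  ring

lemma norm_natCast_add_one_cpow (n : ℕ) (s : ℂ) :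
    ‖((n : ℂ) + 1) ^ s‖ = ((n : ℝ) + 1) ^ s.re := by
  exact_mod_cast norm_natCast_cpow_of_pos n.succ_pos s

lemma summable_norm_natCast_add_one_cpow_neg {a : ℂ} (ha : 1 < a.re) :
    Summable fun n : ℕ => ‖((n : ℂ) + 1) ^ (-a)‖ := by
  simp only [norm_natCast_add_one_cpow, neg_re]
  exact_mod_cast (summable_nat_add_iff 1).mpr (Real.summable_nat_rpow.mpr (by linarith))

lemma summable_mordellTornheim2Term {a b c : ℂ} (ha : 1 < a.re) (hb : 1 < b.re) (hc : 0 ≤ c.re) :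
    Summable fun p : ℕ × ℕ => mordellTornheim2Term a b c ((p.1 : ℂ) + 1) ((p.2 : ℂ) + 1) := by
  have hab := summable_mul_of_summable_norm (summable_norm_natCast_add_one_cpow_neg ha)
    (summable_norm_natCast_add_one_cpow_neg hb)
  refine .of_norm_bounded hab.norm fun p => ?_
  have hxy : ((p.1 : ℂ) + 1) + ((p.2 : ℂ) + 1) = ((p.1 + p.2 + 1 : ℕ) : ℂ) + 1 := by
    push_cast; ring
  have hxy_cpow_le_one : ‖(((p.1 : ℂ) + 1) + ((p.2 : ℂ) + 1)) ^ (-c)‖ ≤ 1 := by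
    rw [hxy, norm_natCast_add_one_cpow, neg_re]
    exact Real.rpow_le_one_of_one_le_of_nonpos (le_add_of_nonneg_left (Nat.cast_nonneg _))
      (neg_nonpos.mpr hc)
  rw [mordellTornheim2Term, norm_mul _ ((_ : ℂ) ^ (-c))]
  exact mul_le_of_le_one_right (norm_nonneg _) hxy_cpow_le_one

lemma hasSum_mordellTornheim2 (a b c : ℂ) (ha : 1 < a.re) (hb : 1 < b.re) (hc : 0 ≤ c.re) :
    HasSum (fun p : ℕ × ℕ => mordellTornheim2Term a b c ((p.1 : ℂ) + 1) ((p.2 : ℂ) + 1))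
      (mordellTornheim2 a b c) := by
  convert (summable_mordellTornheim2Term ha hb hc).hasSum using 1
  refine tsum_congr fun p => ?_
  rw [mordellTornheim2Term, add_add_add_comm, one_add_one_eq_two]

/-- Identity (4.5) for the Mordell–Tornheim double zeta-function (coefficient
of `a` in the generating function of Example 4.2). -/
theorem mordellTornheim2_identity_a (s₁ s₂ s₃ : ℂ)
    (h₁ : 3 < s₁.re) (h₂ : 3 < s₂.re) (h₃ : 3 < s₃.re) :
    (s₂ - 1) * (s₁ - s₃) * mordellTornheim2 s₁ s₂ s₃
      - s₃ * (2 - s₁ - s₂ + s₃) * mordellTornheim2 s₁ (s₂ - 1) (s₃ + 1)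
      + s₃ * (s₃ + 1) * mordellTornheim2 s₁ (s₂ - 2) (s₃ + 2)
      + s₁ * (s₂ - s₃ - 1) * mordellTornheim2 (s₁ + 1) (s₂ - 1) s₃
      - s₁ * (s₂ - 1) * mordellTornheim2 (s₁ + 1) s₂ (s₃ - 1)
      + s₁ * s₃ * mordellTornheim2 (s₁ + 1) (s₂ - 2) (s₃ + 1)
      + (s₂ - 1) * s₃ * mordellTornheim2 (s₁ - 1) s₂ (s₃ + 1)
      + s₃ * (s₃ + 1) * mordellTornheim2 (s₁ - 1) (s₂ - 1) (s₃ + 2) = 0 := by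
  have hLHS :=
    ((((((((hasSum_mordellTornheim2 s₁ s₂ s₃ ?_ ?_ ?_).mul_left ((s₂ - 1) * (s₁ - s₃))).sub
      ((hasSum_mordellTornheim2 s₁ (s₂ - 1) (s₃ + 1) ?_ ?_ ?_).mul_left
        (s₃ * (2 - s₁ - s₂ + s₃)))).add
      ((hasSum_mordellTornheim2 s₁ (s₂ - 2) (s₃ + 2) ?_ ?_ ?_).mul_left (s₃ * (s₃ + 1)))).add
      ((hasSum_mordellTornheim2 (s₁ + 1) (s₂ - 1) s₃ ?_ ?_ ?_).mul_left
        (s₁ * (s₂ - s₃ - 1)))).sub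
      ((hasSum_mordellTornheim2 (s₁ + 1) s₂ (s₃ - 1) ?_ ?_ ?_).mul_left (s₁ * (s₂ - 1)))).add
      ((hasSum_mordellTornheim2 (s₁ + 1) (s₂ - 2) (s₃ + 1) ?_ ?_ ?_).mul_left (s₁ * s₃))).add
      ((hasSum_mordellTornheim2 (s₁ - 1) s₂ (s₃ + 1) ?_ ?_ ?_).mul_left ((s₂ - 1) * s₃))).add
      ((hasSum_mordellTornheim2 (s₁ - 1) (s₂ - 1) (s₃ + 2) ?_ ?_ ?_).mul_left (s₃ * (s₃ + 1)))
  · refine hLHS.unique ?_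
    convert hasSum_zero with p
    exact mordellTornheim2Term_identity_a (Nat.cast_add_one_ne_zero _)
      (Nat.cast_add_one_ne_zero _) (by norm_cast) s₁ s₂ s₃
  all_goals norm_num; linarith
end

section
/- Let N ∈ ℕ (N ≥ 0) and let s ∈ ℂ with Re s > N + 2. Then ∑_{n=1}^∞ ( ∑_{k=1}^{n−1} k^N ) · n^{−s} = (1/(N+1))·ζ(s−N−1) − ∑_{k=0}^{N} binom(N,k)·ζ(s−N+k)·ζ(−k) + ζ(s)·ζ(−N) − ζ(s−N), where ζ is the Riemann zeta function (the series on the left converges absolutely, and every argument s−N−1, s−N+k, s, s−N of ζ on the right has real part > 1 or is a nonpositive integer, so no poles occur). (Lemma 5.1, formula (5.2), expressing the Euler–Zagier double zeta value ζ_2(−N, s) in terms of Riemann zeta values.) -/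
open Complex Finset

/-!
Faulhaber's formula writes `∑_{k<m} k^N` as
`m^(N+1)/(N+1) + ∑_{k<N} C(N,k) B'_{k+1}/(k+1) m^(N-k) - m^N`, and `B'_{k+1}/(k+1) = -ζ(-k)`.
Multiplying by `m^(-s)` and summing over `m ≥ 1` turns each monomial `m^e` into `ζ(s - e)`.
On the right-hand side, the `k = N` term of the sum cancels against `ζ(s) ζ(-N)`.
-/

lemma hasSum_add_one_cpow_neg {s : ℂ} (hs : 1 < s.re) :
    HasSum (fun n : ℕ => ((n : ℂ) + 1) ^ (-s)) (riemannZeta s) := by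
  have hsum : Summable (fun n : ℕ => 1 / ((n : ℂ) + 1) ^ s) :=
    (summable_nat_add_iff 1).mpr (summable_one_div_nat_cpow.mpr hs) |>.congr fun n => by simp
  simpa [zeta_eq_tsum_one_div_nat_add_one_cpow hs, cpow_neg] using hsum.hasSum

lemma hasSum_mul_add_one_cpow_mul_cpow_neg (c : ℂ) {e s : ℂ} (h : 1 < (s - e).re) :
    HasSum (fun n : ℕ => c * ((n : ℂ) + 1) ^ e * ((n : ℂ) + 1) ^ (-s))
      (c * riemannZeta (s - e)) := by
  have hpow (n : ℕ) : ((n : ℂ) + 1) ^ e * ((n : ℂ) + 1) ^ (-s) = ((n : ℂ) + 1) ^ (-(s - e)) := by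
    rw [← cpow_add _ _ (Nat.cast_add_one_ne_zero n), neg_sub, sub_eq_add_neg]
  simpa only [mul_assoc, hpow] using (hasSum_add_one_cpow_neg h).mul_left c

lemma mul_add_one_choose_add_one_div {K : Type*} [Field K] [CharZero K] (N k : ℕ) (b : K) :
    b * (N + 1).choose (k + 1) / (N + 1) = N.choose k * (b / (k + 1)) := by
  have h : ((N : K) + 1) * N.choose k = (N + 1).choose (k + 1) * ((k : K) + 1) := by
    exact_mod_cast Nat.add_one_mul_choose_eq N k
  field_simp
  linear_combination -b * h

lemma sum_range_add_one_pow {K : Type*} [Field K] [CharZero K] (N n : ℕ) :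
    ∑ k ∈ range n, ((k : K) + 1) ^ N =
      ((n : K) + 1) ^ (N + 1) / (N + 1)
        + ∑ k ∈ range N,
            (N.choose k : K) * (bernoulli' (k + 1) / (k + 1)) * ((n : K) + 1) ^ (N - k)
        - ((n : K) + 1) ^ N := by
  have h := congrArg (Rat.cast : ℚ → K) (sum_Ico_pow (n + 1) N)
  rw [sum_Ico_eq_sum_range, Nat.add_sub_cancel, sum_range_succ, sum_range_succ'] at h
  push_cast [add_comm 1, Nat.add_sub_add_right, bernoulli'_zero] at h
  simp only [Nat.choose_zero_right, Nat.cast_one, one_mul] at h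
  simp only [← mul_add_one_choose_add_one_div, div_mul_eq_mul_div]
  linear_combination h

lemma bernoulli'_succ_div_succ_eq_neg_riemannZeta (k : ℕ) :
    (bernoulli' (k + 1) : ℂ) / (k + 1) = -riemannZeta (-k) := by
  rw [riemannZeta_neg_nat_eq_bernoulli', neg_div, neg_neg]

/-- Lemma 5.1, formula (5.2): for `N ∈ ℕ` and `Re s > N + 2`, the Euler–Zagier
double zeta value `ζ₂(-N, s) = ∑_{n ≥ 1} (∑_{k=1}^{n-1} k^N) n^{-s}` equals
`(1/(N+1)) ζ(s-N-1) - ∑_{k=0}^N C(N,k) ζ(s-N+k) ζ(-k) + ζ(s) ζ(-N) - ζ(s-N)`. -/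
theorem zeta2_neg_nat_eq (N : ℕ) (s : ℂ) (hs : (N : ℝ) + 2 < s.re) :
    (∑' n : ℕ, (∑ k ∈ Finset.range n, ((k : ℂ) + 1) ^ N) * ((n : ℂ) + 1) ^ (-s))
      = (1 / ((N : ℂ) + 1)) * riemannZeta (s - N - 1)
        - ∑ k ∈ Finset.range (N + 1),
            (N.choose k : ℂ) * riemannZeta (s - N + k) * riemannZeta (-(k : ℂ))
        + riemannZeta s * riemannZeta (-(N : ℂ))
        - riemannZeta (s - N) := by
  have hre (e : ℕ) (he : e ≤ N + 1) : 1 < (s - e).re := by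
    have : (e : ℝ) ≤ N + 1 := by exact_mod_cast he
    rw [sub_re, natCast_re]
    linarith
  have h1 := hasSum_mul_add_one_cpow_mul_cpow_neg (1 / ((N : ℂ) + 1)) (hre (N + 1) le_rfl)
  have h2 := hasSum_sum fun k (_ : k ∈ range N) =>
    hasSum_mul_add_one_cpow_mul_cpow_neg (N.choose k * riemannZeta (-k)) (hre (N - k) (by omega))
  have h3 := hasSum_mul_add_one_cpow_mul_cpow_neg 1 (hre N (by omega))
  refine (tsum_congr fun n => ?_).trans (((h1.sub h2).sub h3).tsum_eq.trans ?_)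
  · simp only [cpow_natCast, sum_range_add_one_pow, bernoulli'_succ_div_succ_eq_neg_riemannZeta,
      sub_mul, add_mul, sum_mul, mul_neg, neg_mul, sum_neg_distrib]
    ring
  · have harg (k : ℕ) (hk : k ∈ range N) : s - ((N - k : ℕ) : ℂ) = s - N + k := by
      rw [Nat.cast_sub (mem_range.1 hk).le]
      ring
    rw [sum_range_succ, Nat.choose_self, Nat.cast_one, one_mul, sub_add_cancel, Nat.cast_succ,
      ← sub_sub, sum_congr rfl fun k hk => by rw [harg k hk, mul_right_comm]]
    ring
end

section
/- Let N ∈ ℕ (N ≥ 0) and let s ∈ ℂ with Re s > N + 2. Write ζ_2(−M, w) = ∑_{n≥2} ( ∑_{k=1}^{n−1} k^M ) · n^{−w} (absolutely convergent for Re w > M + 2). Then (−N−1)(s−1)·ζ_2(−N, s) + s(s+1+N)·ζ_2(−N−1, s+1) − s(s+1)·ζ_2(−N−2, s+2) = ((s−N−3)(s−N−2)/((N+3)(N+2)))·ζ(s−N−1) + ∑_{k=0}^{N+1} ((k·s + N − k + 2)(s−N+k−1)/(N+2))·binom(N+2, k)·ζ(s−N+k)·ζ(−k) − (N+1)(s−1)·ζ(s)·ζ(−N)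 + s(s+1+N)·ζ(s+1)·ζ(−N−1) + (s−N−1)·ζ(s−N). (Proposition 5.4: the formula for the desingularized double zeta value ζ_2^{des}(−N, s), where by definition ζ_2^{des}(s_1,s_2) = (s_1−1)(s_2−1)ζ_2(s_1,s_2) + s_2(s_2+1−s_1)ζ_2(s_1−1,s_2+1) − s_2(s_2+1)ζ_2(s_1−2,s_2+2).) -/
open Complex Finset

/-- The Euler–Zagier double zeta value at a nonpositive integer first argument:
`zeta2Neg M w = ζ₂(-M, w) = ∑_{n ≥ 2} (∑_{k=1}^{n-1} k^M) n^{-w}`,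
absolutely convergent for `Re w > M + 2`. -/
noncomputable def zeta2Neg (M : ℕ) (w : ℂ) : ℂ :=
  ∑' n : ℕ, (∑ k ∈ Finset.range n, ((k : ℂ) + 1) ^ M) * ((n : ℂ) + 1) ^ (-w)

lemma summable_aux (a : ℕ) {w : ℂ} (hw : 1 < (w - a).re) :
    Summable (fun n : ℕ => ((n:ℂ)+1)^a * ((n:ℂ)+1)^(-w)) := by
  have hfe : ∀ n : ℕ, ((n:ℂ)+1)^a * ((n:ℂ)+1)^(-w) = 1 / ((n:ℂ)+1)^(w - (a:ℂ)) := by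
    intro n
    have h0 : ((n : ℂ) + 1) ≠ 0 := by exact_mod_cast Nat.succ_ne_zero n
    rw [← cpow_natCast ((n:ℂ)+1) a, ← cpow_add _ _ h0]
    rw [show (a:ℂ) + -w = -(w - a) by ring, cpow_neg, one_div]
  simp only [hfe]
  have h1 : Summable (fun n : ℕ => 1 / ((n:ℂ))^(w - (a:ℂ))) :=
    Complex.summable_one_div_nat_cpow.mpr hw
  have h2 := (summable_nat_add_iff 1).mpr h1
  simpa using h2

lemma tsum_aux (a : ℕ) {w : ℂ} (hw : 1 < (w - a).re) :
    ∑' n : ℕ, ((n:ℂ)+1)^a * ((n:ℂ)+1)^(-w) = riemannZeta (w - a) := by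
  have hfe : ∀ n : ℕ, ((n:ℂ)+1)^a * ((n:ℂ)+1)^(-w) = 1 / ((n:ℂ)+1)^(w - (a:ℂ)) := by
    intro n
    have h0 : ((n : ℂ) + 1) ≠ 0 := by exact_mod_cast Nat.succ_ne_zero n
    rw [← cpow_natCast ((n:ℂ)+1) a, ← cpow_add _ _ h0]
    rw [show (a:ℂ) + -w = -(w - a) by ring, cpow_neg, one_div]
  simp only [hfe]
  rw [zeta_eq_tsum_one_div_nat_add_one_cpow hw]

lemma faulhaber_rat (M n : ℕ) :
    (∑ k ∈ Finset.range n, ((k : ℚ) + 1) ^ M) =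
      (∑ i ∈ Finset.range (M+1),
        bernoulli' i * ((M+1).choose i : ℚ) * ((n:ℚ)+1)^(M+1-i) / ((M:ℚ)+1)) - ((n:ℚ)+1)^M := by
  have h1 : (∑ k ∈ Finset.range (n+1), ((k : ℚ) + 1) ^ M) = ∑ k ∈ Finset.Ico 1 (n+1+1), (k:ℚ)^M := by
    rw [Finset.sum_Ico_eq_sum_range]
    refine Finset.sum_congr (by norm_num) fun i _ => ?_
    push_cast
    ring
  have h2 := sum_Ico_pow (n+1) M
  have h3 := Finset.sum_range_succ (fun k => ((k:ℚ)+1)^M) n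
  rw [h1, h2] at h3
  have h4 : (∑ k ∈ Finset.range n, ((k:ℚ)+1)^M)
      = (∑ i ∈ Finset.range (M+1),
          bernoulli' i * ((M+1).choose i : ℚ) * ((n+1:ℕ):ℚ)^(M+1-i) / ((M:ℚ)+1)) - ((n:ℚ)+1)^M := by
    push_cast at h3 ⊢
    linarith [h3]
  rw [h4]
  push_cast
  rfl

lemma faulhaber_complex (M n : ℕ) :
    (∑ k ∈ Finset.range n, ((k : ℂ) + 1) ^ M) =
      (∑ i ∈ Finset.range (M+1),
        ((bernoulli' i : ℚ) : ℂ) * ((M+1).choose i : ℂ) * ((n:ℂ)+1)^(M+1-i) / ((M:ℂ)+1)) - ((n:ℂ)+1)^M := by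
  have := congrArg (fun q : ℚ => (q : ℂ)) (faulhaber_rat M n)
  push_cast at this ⊢
  exact this

lemma zeta2Neg_eq (M : ℕ) {w : ℂ} (hw : (M:ℝ) + 2 < w.re) :
    zeta2Neg M w =
      (∑ i ∈ Finset.range (M+1), ((bernoulli' i : ℚ) : ℂ) * ((M+1).choose i : ℂ) / ((M:ℂ)+1)
          * riemannZeta (w - (M:ℂ) - 1 + i)) - riemannZeta (w - M) := by
  have hre : ∀ a : ℕ, a ≤ M + 1 → 1 < (w - (a : ℂ)).re := by
    intro a ha
    have h1 : ((a:ℝ)) ≤ (M:ℝ) + 1 := by exact_mod_cast ha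
    simp only [Complex.sub_re, Complex.natCast_re]
    linarith
  have hsum : ∀ i ∈ Finset.range (M+1), Summable (fun n : ℕ =>
      ((bernoulli' i : ℚ) : ℂ) * ((M+1).choose i : ℂ) / ((M:ℂ)+1)
        * (((n:ℂ)+1)^(M+1-i) * ((n:ℂ)+1)^(-w))) := by
    intro i hi
    exact (summable_aux (M+1-i) (hre _ (Nat.sub_le _ _))).mul_left _
  have hsum2 : Summable (fun n : ℕ => ((n:ℂ)+1)^M * ((n:ℂ)+1)^(-w)) :=
    summable_aux M (hre M (Nat.le_succ M))
  unfold zeta2Neg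
  have step1 : ∀ n : ℕ, (∑ k ∈ Finset.range n, ((k:ℂ)+1)^M) * ((n:ℂ)+1)^(-w)
      = (∑ i ∈ Finset.range (M+1),
          ((bernoulli' i : ℚ) : ℂ) * ((M+1).choose i : ℂ) / ((M:ℂ)+1)
            * (((n:ℂ)+1)^(M+1-i) * ((n:ℂ)+1)^(-w)))
        - ((n:ℂ)+1)^M * ((n:ℂ)+1)^(-w) := by
    intro n
    rw [faulhaber_complex, sub_mul, Finset.sum_mul]
    congr 1
    exact Finset.sum_congr rfl fun i _ => by ring
  rw [tsum_congr step1, Summable.tsum_sub (summable_sum hsum) hsum2, Summable.tsum_finsetSum hsum]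
  congr 1
  · refine Finset.sum_congr rfl fun i hi => ?_
    rw [tsum_mul_left, tsum_aux (M+1-i) (hre _ (Nat.sub_le _ _))]
    have hiM : i ≤ M := Nat.lt_succ_iff.mp (Finset.mem_range.mp hi)
    congr 2
    have hc : ((M+1-i : ℕ) : ℂ) = (M:ℂ) + 1 - (i:ℂ) := by
      push_cast [Nat.cast_sub (by omega : i ≤ M + 1)]
      ring
    rw [hc]
    ring
  · exact tsum_aux M (hre M (Nat.le_succ M))

lemma coef_id (N k : ℕ) (hk : k ≤ N + 1) (s : ℂ) :
    (-(N:ℂ)-1)*(s-1) * (((N+1).choose (k+1) : ℕ) : ℂ) / ((N:ℂ)+1)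
      + s*(s+1+(N:ℂ)) * (((N+2).choose (k+1) : ℕ) : ℂ) / ((N:ℂ)+2)
      - s*(s+1) * (((N+3).choose (k+1) : ℕ) : ℂ) / ((N:ℂ)+3)
    = -((((k:ℂ)*s+(N:ℂ)-(k:ℂ)+2)*(s-(N:ℂ)+(k:ℂ)-1)) * (((N+2).choose k : ℕ) : ℂ))
        / ((N:ℂ)+2) / ((k:ℂ)+1) := by
  have hk1 : ((k:ℂ)+1) ≠ 0 := by exact_mod_cast Nat.succ_ne_zero k
  have hN1 : ((N:ℂ)+1) ≠ 0 := by exact_mod_cast Nat.succ_ne_zero N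
  have hN2 : ((N:ℂ)+2) ≠ 0 := by exact_mod_cast Nat.succ_ne_zero (N+1)
  have hN3 : ((N:ℂ)+3) ≠ 0 := by exact_mod_cast Nat.succ_ne_zero (N+2)
  have hsub : ((N + 2 - k : ℕ) : ℂ) = (N:ℂ) + 2 - (k:ℂ) := by
    push_cast [Nat.cast_sub (by omega : k ≤ N + 2)]; ring
  have hN2k : ((N:ℂ)+2-(k:ℂ)) ≠ 0 := by
    rw [← hsub]
    exact_mod_cast (by omega : N + 2 - k ≠ 0)
  have f1 : ((N+2).choose (k+1) * (k+1) : ℕ) = (N+2) * ((N+1).choose k) :=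
    (Nat.add_one_mul_choose_eq (N+1) k).symm
  have f2 : ((N+3).choose (k+1) * (k+1) : ℕ) = (N+3) * ((N+2).choose k) :=
    (Nat.add_one_mul_choose_eq (N+2) k).symm
  have f3 : ((N+1).choose (k+1) * (k+1) : ℕ) = (N+1).choose k * (N+1-k) :=
    Nat.choose_succ_right_eq (N+1) k
  have f4 : ((N+2).choose (k+1) * (k+1) : ℕ) = (N+2).choose k * (N+2-k) :=
    Nat.choose_succ_right_eq (N+2) k
  have c1 : (((N+2).choose (k+1) : ℕ) : ℂ) * ((k:ℂ)+1) = ((N:ℂ)+2) * (((N+1).choose k : ℕ) : ℂ) := by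
    exact_mod_cast congrArg (fun m : ℕ => (m : ℂ)) f1
  have c2 : (((N+3).choose (k+1) : ℕ) : ℂ) * ((k:ℂ)+1) = ((N:ℂ)+3) * (((N+2).choose k : ℕ) : ℂ) := by
    exact_mod_cast congrArg (fun m : ℕ => (m : ℂ)) f2
  have c3 : (((N+1).choose (k+1) : ℕ) : ℂ) * ((k:ℂ)+1)
      = (((N+1).choose k : ℕ) : ℂ) * ((N:ℂ)+1-(k:ℂ)) := by
    have := congrArg (fun m : ℕ => (m : ℂ)) f3
    push_cast [Nat.cast_sub (by omega : k ≤ N + 1)] at this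
    convert this using 2
  have c4 : (((N+2).choose (k+1) : ℕ) : ℂ) * ((k:ℂ)+1)
      = (((N+2).choose k : ℕ) : ℂ) * ((N:ℂ)+2-(k:ℂ)) := by
    have := congrArg (fun m : ℕ => (m : ℂ)) f4
    push_cast [Nat.cast_sub (by omega : k ≤ N + 2)] at this
    convert this using 2
  set y : ℂ := (((N+1).choose k : ℕ) : ℂ) with hy
  have e1 : (((N+2).choose (k+1) : ℕ) : ℂ) = ((N:ℂ)+2) * y / ((k:ℂ)+1) := by
    field_simp
    linear_combination c1
  have e4 : (((N+2).choose k : ℕ) : ℂ) = ((N:ℂ)+2) * y / ((N:ℂ)+2-(k:ℂ)) := by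
    field_simp
    linear_combination c4.symm.trans c1
  have e2 : (((N+3).choose (k+1) : ℕ) : ℂ)
      = ((N:ℂ)+3) * (((N:ℂ)+2) * y) / (((k:ℂ)+1) * ((N:ℂ)+2-(k:ℂ))) := by
    rw [eq_div_iff (mul_ne_zero hk1 hN2k)]
    rw [show (((N+3).choose (k+1):ℕ):ℂ) * (((k:ℂ)+1) * ((N:ℂ)+2-(k:ℂ)))
      = ((((N+3).choose (k+1):ℕ):ℂ) * ((k:ℂ)+1)) * ((N:ℂ)+2-(k:ℂ)) by ring, c2]
    rw [mul_comm, ← mul_assoc]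
    rw [show ((N:ℂ)+2-(k:ℂ)) * (((N:ℂ)+3)) * (((N+2).choose k : ℕ) : ℂ)
      = ((N:ℂ)+3) * ((((N+2).choose k : ℕ) : ℂ) * ((N:ℂ)+2-(k:ℂ))) by ring]
    rw [e4]
    field_simp
  have e3 : (((N+1).choose (k+1) : ℕ) : ℂ) = y * ((N:ℂ)+1-(k:ℂ)) / ((k:ℂ)+1) := by
    field_simp
    linear_combination c3
  rw [e1, e2, e3, e4]
  field_simp
  ring

/-- Proposition 5.4: the formula for the desingularized double zeta value
`ζ₂^{des}(-N, s)` in terms of Riemann zeta values, for `Re s > N + 2`. -/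
theorem zeta2des_neg_nat_eq (N : ℕ) (s : ℂ) (hs : (N : ℝ) + 2 < s.re) :
    (-(N : ℂ) - 1) * (s - 1) * zeta2Neg N s
      + s * (s + 1 + N) * zeta2Neg (N + 1) (s + 1)
      - s * (s + 1) * zeta2Neg (N + 2) (s + 2)
      = ((s - N - 3) * (s - N - 2) / (((N : ℂ) + 3) * ((N : ℂ) + 2))) *
          riemannZeta (s - N - 1)
        + ∑ k ∈ Finset.range (N + 2),
            (((k : ℂ) * s + N - k + 2) * (s - N + k - 1) / ((N : ℂ) + 2)) *
              ((N + 2).choose k : ℂ) * riemannZeta (s - N + k) *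
              riemannZeta (-(k : ℂ))
        - ((N : ℂ) + 1) * (s - 1) * riemannZeta s * riemannZeta (-(N : ℂ))
        + s * (s + 1 + N) * riemannZeta (s + 1) * riemannZeta (-(N : ℂ) - 1)
        + (s - N - 1) * riemannZeta (s - N) := by
  have hN1 : ((N:ℂ)+1) ≠ 0 := by exact_mod_cast Nat.succ_ne_zero N
  have hN2 : ((N:ℂ)+2) ≠ 0 := by exact_mod_cast Nat.succ_ne_zero (N+1)
  have hN3 : ((N:ℂ)+3) ≠ 0 := by exact_mod_cast Nat.succ_ne_zero (N+2)
  -- expansions of the three double zeta values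
  have h1 : zeta2Neg N s =
      (∑ i ∈ Finset.range (N+1), ((bernoulli' i : ℚ) : ℂ) * ((N+1).choose i : ℂ) / ((N:ℂ)+1)
        * riemannZeta (s - (N:ℂ) - 1 + i)) - riemannZeta (s - N) := zeta2Neg_eq N hs
  have h2 : zeta2Neg (N+1) (s+1) =
      (∑ i ∈ Finset.range (N+2), ((bernoulli' i : ℚ) : ℂ) * ((N+2).choose i : ℂ) / ((N:ℂ)+2)
        * riemannZeta (s - (N:ℂ) - 1 + i)) - riemannZeta (s - N) := by
    rw [zeta2Neg_eq (N+1) (w := s+1)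
      (by simp only [Complex.add_re, Complex.one_re]; push_cast; linarith)]
    congr 1
    · refine Finset.sum_congr rfl fun i _ => ?_
      rw [show (s+1) - ((N+1:ℕ):ℂ) - 1 + (i:ℂ) = s - (N:ℂ) - 1 + (i:ℂ) by push_cast; ring]
      push_cast
      ring
    · rw [show (s+1) - ((N+1:ℕ):ℂ) = s - (N:ℂ) by push_cast; ring]
  have h3 : zeta2Neg (N+2) (s+2) =
      (∑ i ∈ Finset.range (N+3), ((bernoulli' i : ℚ) : ℂ) * ((N+3).choose i : ℂ) / ((N:ℂ)+3)
        * riemannZeta (s - (N:ℂ) - 1 + i)) - riemannZeta (s - N) := by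
    rw [zeta2Neg_eq (N+2) (w := s+2)
      (by simp only [Complex.add_re, Complex.ofReal_re]; norm_num; linarith)]
    congr 1
    · refine Finset.sum_congr rfl fun i _ => ?_
      rw [show (s+2) - ((N+2:ℕ):ℂ) - 1 + (i:ℂ) = s - (N:ℂ) - 1 + (i:ℂ) by push_cast; ring]
      push_cast
      ring
    · rw [show (s+2) - ((N+2:ℕ):ℂ) = s - (N:ℂ) by push_cast; ring]
  -- rewrite the negative zeta values on the RHS
  have hRs : (∑ k ∈ Finset.range (N + 2),
        (((k : ℂ) * s + N - k + 2) * (s - N + k - 1) / ((N : ℂ) + 2)) *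
          ((N + 2).choose k : ℂ) * riemannZeta (s - N + k) * riemannZeta (-(k : ℂ)))
      = ∑ k ∈ Finset.range (N + 2),
        (((k : ℂ) * s + N - k + 2) * (s - N + k - 1) / ((N : ℂ) + 2)) *
          ((N + 2).choose k : ℂ) * riemannZeta (s - N + k)
            * (-((bernoulli' (k+1) : ℚ) : ℂ) / ((k:ℂ) + 1)) := by
    refine Finset.sum_congr rfl fun k _ => ?_
    rw [riemannZeta_neg_nat_eq_bernoulli' k]
  have hzN : riemannZeta (-(N:ℂ)) = -((bernoulli' (N+1) : ℚ) : ℂ) / ((N:ℂ) + 1) :=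
    riemannZeta_neg_nat_eq_bernoulli' N
  have hzN1 : riemannZeta (-(N:ℂ) - 1) = -((bernoulli' (N+2) : ℚ) : ℂ) / ((N:ℂ) + 2) := by
    rw [show -(N:ℂ) - 1 = -((N+1:ℕ):ℂ) by push_cast; ring, riemannZeta_neg_nat_eq_bernoulli' (N+1)]
    push_cast
    ring
  -- the master identity
  have key : (-(N : ℂ) - 1) * (s - 1) *
        (∑ i ∈ Finset.range (N+3), ((bernoulli' i : ℚ) : ℂ) * ((N+1).choose i : ℂ) / ((N:ℂ)+1)
          * riemannZeta (s - (N:ℂ) - 1 + i))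
      + s * (s + 1 + N) *
        (∑ i ∈ Finset.range (N+3), ((bernoulli' i : ℚ) : ℂ) * ((N+2).choose i : ℂ) / ((N:ℂ)+2)
          * riemannZeta (s - (N:ℂ) - 1 + i))
      - s * (s + 1) *
        (∑ i ∈ Finset.range (N+3), ((bernoulli' i : ℚ) : ℂ) * ((N+3).choose i : ℂ) / ((N:ℂ)+3)
          * riemannZeta (s - (N:ℂ) - 1 + i))
      = ((s - N - 3) * (s - N - 2) / (((N : ℂ) + 3) * ((N : ℂ) + 2))) *
          riemannZeta (s - N - 1)
        + ∑ k ∈ Finset.range (N + 2),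
            (((k : ℂ) * s + N - k + 2) * (s - N + k - 1) / ((N : ℂ) + 2)) *
              ((N + 2).choose k : ℂ) * riemannZeta (s - N + k)
                * (-((bernoulli' (k+1) : ℚ) : ℂ) / ((k:ℂ) + 1)) := by
    rw [Finset.mul_sum, Finset.mul_sum, Finset.mul_sum, ← Finset.sum_add_distrib,
      ← Finset.sum_sub_distrib]
    rw [Finset.sum_range_succ' _ (N+2), add_comm]
    congr 1
    · -- i = 0 term
      rw [show s - (N:ℂ) - 1 + ((0:ℕ):ℂ) = s - (N:ℂ) - 1 by push_cast; ring]
      have h0 : (-(N:ℂ)-1)*(s-1) * (((bernoulli' 0 : ℚ) : ℂ) * ((N+1).choose 0 : ℂ) / ((N:ℂ)+1))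
          + s*(s+1+(N:ℂ)) * (((bernoulli' 0 : ℚ) : ℂ) * ((N+2).choose 0 : ℂ) / ((N:ℂ)+2))
          - s*(s+1) * (((bernoulli' 0 : ℚ) : ℂ) * ((N+3).choose 0 : ℂ) / ((N:ℂ)+3))
          = (s - N - 3) * (s - N - 2) / (((N : ℂ) + 3) * ((N : ℂ) + 2)) := by
        simp only [bernoulli'_zero, Nat.choose_zero_right, Nat.cast_one]
        field_simp
        ring
      calc (-(N:ℂ)-1)*(s-1) * (((bernoulli' 0 : ℚ) : ℂ) * ((N+1).choose 0 : ℂ) / ((N:ℂ)+1)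
              * riemannZeta (s - (N:ℂ) - 1))
            + s*(s+1+(N:ℂ)) * (((bernoulli' 0 : ℚ) : ℂ) * ((N+2).choose 0 : ℂ) / ((N:ℂ)+2)
              * riemannZeta (s - (N:ℂ) - 1))
            - s*(s+1) * (((bernoulli' 0 : ℚ) : ℂ) * ((N+3).choose 0 : ℂ) / ((N:ℂ)+3)
              * riemannZeta (s - (N:ℂ) - 1))
          = ((-(N:ℂ)-1)*(s-1) * (((bernoulli' 0 : ℚ) : ℂ) * ((N+1).choose 0 : ℂ) / ((N:ℂ)+1))
            + s*(s+1+(N:ℂ)) * (((bernoulli' 0 : ℚ) : ℂ) * ((N+2).choose 0 : ℂ) / ((N:ℂ)+2))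
            - s*(s+1) * (((bernoulli' 0 : ℚ) : ℂ) * ((N+3).choose 0 : ℂ) / ((N:ℂ)+3)))
              * riemannZeta (s - (N:ℂ) - 1) := by ring
        _ = _ := by rw [h0]
    · refine Finset.sum_congr rfl fun k hk => ?_
      have hk' : k ≤ N + 1 := by
        have := Finset.mem_range.mp hk
        omega
      rw [show s - (N:ℂ) - 1 + ((k+1:ℕ):ℂ) = s - (N:ℂ) + (k:ℂ) by push_cast; ring]
      have hc := coef_id N k hk' s
      have hcoef : (-(N:ℂ)-1)*(s-1) * (((bernoulli' (k+1) : ℚ) : ℂ) * ((N+1).choose (k+1) : ℂ) / ((N:ℂ)+1))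
          + s*(s+1+(N:ℂ)) * (((bernoulli' (k+1) : ℚ) : ℂ) * ((N+2).choose (k+1) : ℂ) / ((N:ℂ)+2))
          - s*(s+1) * (((bernoulli' (k+1) : ℚ) : ℂ) * ((N+3).choose (k+1) : ℂ) / ((N:ℂ)+3))
          = (((k : ℂ) * s + N - k + 2) * (s - N + k - 1) / ((N : ℂ) + 2)) *
              ((N + 2).choose k : ℂ) * (-((bernoulli' (k+1) : ℚ) : ℂ) / ((k:ℂ) + 1)) := by
        linear_combination ((bernoulli' (k+1) : ℚ) : ℂ) * hc
      linear_combination riemannZeta (s - (N:ℂ) + (k:ℂ)) * hcoef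
  -- boundary expansions of the first two sums
  have t1 : (∑ i ∈ Finset.range (N+3), ((bernoulli' i : ℚ) : ℂ) * ((N+1).choose i : ℂ) / ((N:ℂ)+1)
        * riemannZeta (s - (N:ℂ) - 1 + i))
      = (∑ i ∈ Finset.range (N+1), ((bernoulli' i : ℚ) : ℂ) * ((N+1).choose i : ℂ) / ((N:ℂ)+1)
        * riemannZeta (s - (N:ℂ) - 1 + i))
        + ((bernoulli' (N+1) : ℚ) : ℂ) / ((N:ℂ)+1) * riemannZeta s := by
    rw [Finset.sum_range_succ _ (N+2), Finset.sum_range_succ _ (N+1)]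
    rw [show s - (N:ℂ) - 1 + ((N+1:ℕ):ℂ) = s by push_cast; ring]
    simp [Nat.choose_self, Nat.choose_succ_self]
  have t2 : (∑ i ∈ Finset.range (N+3), ((bernoulli' i : ℚ) : ℂ) * ((N+2).choose i : ℂ) / ((N:ℂ)+2)
        * riemannZeta (s - (N:ℂ) - 1 + i))
      = (∑ i ∈ Finset.range (N+2), ((bernoulli' i : ℚ) : ℂ) * ((N+2).choose i : ℂ) / ((N:ℂ)+2)
        * riemannZeta (s - (N:ℂ) - 1 + i))
        + ((bernoulli' (N+2) : ℚ) : ℂ) / ((N:ℂ)+2) * riemannZeta (s+1) := by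
    rw [Finset.sum_range_succ _ (N+2)]
    rw [show s - (N:ℂ) - 1 + ((N+2:ℕ):ℂ) = s + 1 by push_cast; ring]
    simp [Nat.choose_self]
  rw [h1, h2, h3, hRs, hzN, hzN1]
  linear_combination key - (-(N : ℂ) - 1) * (s - 1) * t1 - s * (s + 1 + N) * t2
end

section
/- Define g : ℂ → ℂ by g(s) = ((s−4)(s−3)/12)·ζ(s−2) + ((s−2)/2)·ζ(s−1) − (s(s−1)/12)·ζ(s), where ζ is the Riemann zeta function. Then g extends continuously across its removable singularities at s = 1, 2, 3; precisely: (i) lim_{s→1, s≠1} g(s) = 1/8; (ii) lim_{s→2, s≠2} g(s) = 5/12 − ζ(2)/6; (iii) lim_{s→3, s≠3} g(s) = −1/12 + ζ(2)/2 − ζ(3)/2. (Example 5.5: g(s) is the desingularized double zeta-function ζ_2^{des}(−1,s), and these limits give the values ζ_2^{des}(−1,1) = 1/8, ζ_2^{des}(−1,2) = 5/12 − ζ(2)/6, ζ_2^{des}(−1,3) = −1/12 + ζ(2)/2 − ζ(3)/2.) -/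
open Complex Filter Topology

lemma zeta_neg_one : riemannZeta (-1) = -1 / 12 := by
  have h := riemannZeta_neg_nat_eq_bernoulli' 1
  rw [show ((1:ℕ):ℂ) = 1 by norm_num] at h
  rw [h]
  norm_num [bernoulli'_two]

lemma zeta_cont_term (c a : ℂ) (hc : c - a ≠ 1) (f : ℂ → ℂ) (hf : ContinuousAt f c) :
    Tendsto (fun s : ℂ => f s * riemannZeta (s - a)) (𝓝[≠] c) (𝓝 (f c * riemannZeta (c - a))) := by
  apply Tendsto.mono_left _ nhdsWithin_le_nhds
  have h : Tendsto (fun s : ℂ => riemannZeta (s - a)) (𝓝 c) (𝓝 (riemannZeta (c - a))) :=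
    (differentiableAt_riemannZeta hc).continuousAt.tendsto.comp
      ((continuousAt_id.sub continuousAt_const).tendsto)
  exact hf.tendsto.mul h

lemma zeta_sing_term (c a : ℂ) (hc : c - a = 1) (f : ℂ → ℂ) (hf : ContinuousAt f c) :
    Tendsto (fun s : ℂ => f s * ((s - a - 1) * riemannZeta (s - a))) (𝓝[≠] c) (𝓝 (f c)) := by
  have h2 : Tendsto (fun s : ℂ => s - a) (𝓝[≠] c) (𝓝[≠] (1 : ℂ)) := by
    rw [← hc]
    refine tendsto_nhdsWithin_of_tendsto_nhds_of_eventually_within _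
      ((continuousAt_id.sub continuousAt_const).tendsto.mono_left nhdsWithin_le_nhds) ?_
    filter_upwards [self_mem_nhdsWithin] with x hx
    simp only [Set.mem_compl_iff, Set.mem_singleton_iff] at hx ⊢
    exact fun h => hx (sub_left_inj.mp h)
  have := (hf.tendsto.mono_left nhdsWithin_le_nhds).mul (riemannZeta_residue_one.comp h2)
  simpa using this


/-- Example 5.5: the desingularized double zeta-function
`ζ₂^{des}(-1, s) = ((s-4)(s-3)/12) ζ(s-2) + ((s-2)/2) ζ(s-1) - (s(s-1)/12) ζ(s)`
extends continuously across its removable singularities at `s = 1, 2, 3`, with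
values `1/8`, `5/12 - ζ(2)/6`, `-1/12 + ζ(2)/2 - ζ(3)/2` respectively. -/
theorem zeta2des_neg_one_limits :
    Tendsto
      (fun s : ℂ => ((s - 4) * (s - 3) / 12) * riemannZeta (s - 2)
        + ((s - 2) / 2) * riemannZeta (s - 1)
        - (s * (s - 1) / 12) * riemannZeta s)
      (𝓝[≠] (1 : ℂ)) (𝓝 (1 / 8)) ∧
    Tendsto
      (fun s : ℂ => ((s - 4) * (s - 3) / 12) * riemannZeta (s - 2)
        + ((s - 2) / 2) * riemannZeta (s - 1)
        - (s * (s - 1) / 12) * riemannZeta s)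
      (𝓝[≠] (2 : ℂ)) (𝓝 (5 / 12 - riemannZeta 2 / 6)) ∧
    Tendsto
      (fun s : ℂ => ((s - 4) * (s - 3) / 12) * riemannZeta (s - 2)
        + ((s - 2) / 2) * riemannZeta (s - 1)
        - (s * (s - 1) / 12) * riemannZeta s)
      (𝓝[≠] (3 : ℂ)) (𝓝 (-1 / 12 + riemannZeta 2 / 2 - riemannZeta 3 / 2)) := by
  refine ⟨?_, ?_, ?_⟩
  · have T1 := zeta_cont_term 1 2 (by norm_num) (fun s => (s - 4) * (s - 3) / 12) (by fun_prop)
    have T2 := zeta_cont_term 1 1 (by norm_num) (fun s => (s - 2) / 2) (by fun_prop)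
    have T3 := zeta_sing_term 1 0 (by norm_num) (fun s => s / 12) (by fun_prop)
    have key := (T1.add T2).sub T3
    have heq : ∀ s : ℂ,
        ((s - 4) * (s - 3) / 12) * riemannZeta (s - 2) + ((s - 2) / 2) * riemannZeta (s - 1)
          - (s * (s - 1) / 12) * riemannZeta s
        = ((s - 4) * (s - 3) / 12) * riemannZeta (s - 2) + ((s - 2) / 2) * riemannZeta (s - 1)
          - (s / 12) * ((s - 0 - 1) * riemannZeta (s - 0)) := by
      intro s; simp only [sub_zero]; ring
    have := key.congr (fun s => (heq s).symm)
    convert this using 2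
    rw [show (1:ℂ) - 2 = -1 by norm_num, show (1:ℂ) - 1 = 0 by norm_num,
      zeta_neg_one, riemannZeta_zero]
    norm_num
  · have T1 := zeta_cont_term 2 2 (by norm_num) (fun s => (s - 4) * (s - 3) / 12) (by fun_prop)
    have T2 := zeta_sing_term 2 1 (by norm_num) (fun _ => (1 : ℂ) / 2) (by fun_prop)
    have T3 := zeta_cont_term 2 0 (by norm_num) (fun s => s * (s - 1) / 12) (by fun_prop)
    have key := (T1.add T2).sub T3
    have heq : ∀ s : ℂ,
        ((s - 4) * (s - 3) / 12) * riemannZeta (s - 2) + ((s - 2) / 2) * riemannZeta (s - 1)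
          - (s * (s - 1) / 12) * riemannZeta s
        = ((s - 4) * (s - 3) / 12) * riemannZeta (s - 2)
          + ((1 : ℂ) / 2) * ((s - 1 - 1) * riemannZeta (s - 1))
          - (s * (s - 1) / 12) * riemannZeta (s - 0) := by
      intro s; simp only [sub_zero]; ring
    have := key.congr (fun s => (heq s).symm)
    convert this using 2
    rw [show (2:ℂ) - 2 = 0 by norm_num, show (2:ℂ) - 0 = 2 by norm_num, riemannZeta_zero]
    ring
  · have T1 := zeta_sing_term 3 2 (by norm_num) (fun s => (s - 4) / 12) (by fun_prop)
    have T2 := zeta_cont_term 3 1 (by norm_num) (fun s => (s - 2) / 2) (by fun_prop)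
    have T3 := zeta_cont_term 3 0 (by norm_num) (fun s => s * (s - 1) / 12) (by fun_prop)
    have key := (T1.add T2).sub T3
    have heq : ∀ s : ℂ,
        ((s - 4) * (s - 3) / 12) * riemannZeta (s - 2) + ((s - 2) / 2) * riemannZeta (s - 1)
          - (s * (s - 1) / 12) * riemannZeta s
        = ((s - 4) / 12) * ((s - 2 - 1) * riemannZeta (s - 2))
          + ((s - 2) / 2) * riemannZeta (s - 1)
          - (s * (s - 1) / 12) * riemannZeta (s - 0) := by
      intro s; simp only [sub_zero]; ring
    have := key.congr (fun s => (heq s).symm)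
    convert this using 2
    rw [show (3:ℂ) - 1 = 2 by norm_num, show (3:ℂ) - 0 = 3 by norm_num]
    ring
end

section
/- Let s ∈ ℂ with Re s > 3, and write ζ_2(−M, w) = ∑_{n≥2} ( ∑_{k=1}^{n−1} k^M ) · n^{−w} for M ∈ ℕ (absolutely convergent for Re w > M + 2). Then −2(s−1)·ζ_2(−1, s) + s(s+2)·ζ_2(−2, s+1) − s(s+1)·ζ_2(−3, s+2) = ((s−4)(s−3)/12)·ζ(s−2) + ((s−2)/2)·ζ(s−1) − (s(s−1)/12)·ζ(s). (Formula (5.13) of Example 5.5: the desingularized double zeta-function ζ_2^{des}(−1, s), defined as (s_1−1)(s_2−1)ζ_2(s_1,s_2) + s_2(s_2+1−s_1)ζ_2(s_1−1,s_2+1) − s_2(s_2+1)ζ_2(s_1−2,s_2+2) at (s_1,s_2) = (−1,s), equals the displayed combination of Riemann zeta values.) -/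
open Complex Finset

lemma summable_cpow_aux (c : ℂ) (hc : 1 < c.re) :
    Summable fun n : ℕ => ((n : ℂ) + 1) ^ (-c) := by
  have h := (summable_nat_add_iff 1).mpr (Complex.summable_one_div_nat_cpow.mpr hc)
  refine h.congr fun n => ?_
  push_cast
  rw [Complex.cpow_neg, one_div]

lemma tsum_cpow_aux (c : ℂ) (hc : 1 < c.re) :
    ∑' n : ℕ, ((n : ℂ) + 1) ^ (-c) = riemannZeta c := by
  rw [zeta_eq_tsum_one_div_nat_add_one_cpow hc]
  exact tsum_congr fun n => by rw [Complex.cpow_neg, one_div]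

lemma sum_pow1 (n : ℕ) : ∑ k ∈ Finset.range n, ((k : ℂ) + 1) ^ 1
    = (n : ℂ) * ((n : ℂ) + 1) / 2 := by
  induction n with
  | zero => simp
  | succ m ih => rw [Finset.sum_range_succ, ih]; push_cast; ring

lemma sum_pow2 (n : ℕ) : ∑ k ∈ Finset.range n, ((k : ℂ) + 1) ^ 2
    = (n : ℂ) * ((n : ℂ) + 1) * (2 * (n : ℂ) + 1) / 6 := by
  induction n with
  | zero => simp
  | succ m ih => rw [Finset.sum_range_succ, ih]; push_cast; ring

lemma sum_pow3 (n : ℕ) : ∑ k ∈ Finset.range n, ((k : ℂ) + 1) ^ 3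
    = (n : ℂ) ^ 2 * ((n : ℂ) + 1) ^ 2 / 4 := by
  induction n with
  | zero => simp
  | succ m ih => rw [Finset.sum_range_succ, ih]; push_cast; ring

lemma powgen_aux (n : ℕ) (j : ℕ) (w : ℂ) :
    ((n : ℂ) + 1) ^ ((j : ℂ) - w) = ((n : ℂ) + 1) ^ j * ((n : ℂ) + 1) ^ (-w) := by
  rw [sub_eq_add_neg, Complex.cpow_add _ _ (Nat.cast_add_one_ne_zero n),
    Complex.cpow_natCast]

/-- Formula (5.13) of Example 5.5: for `Re s > 3`, the desingularized double
zeta-function `ζ₂^{des}(-1, s)` equals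
`((s-4)(s-3)/12) ζ(s-2) + ((s-2)/2) ζ(s-1) - (s(s-1)/12) ζ(s)`. -/
theorem zeta2des_neg_one_eq (s : ℂ) (hs : 3 < s.re) :
    -2 * (s - 1) * zeta2Neg 1 s + s * (s + 2) * zeta2Neg 2 (s + 1)
      - s * (s + 1) * zeta2Neg 3 (s + 2)
      = ((s - 4) * (s - 3) / 12) * riemannZeta (s - 2)
        + ((s - 2) / 2) * riemannZeta (s - 1)
        - (s * (s - 1) / 12) * riemannZeta s := by
  have h2 : 1 < (s - 2).re := by simp [Complex.sub_re]; linarith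
  have h1 : 1 < (s - 1).re := by simp [Complex.sub_re]; linarith
  have h0 : 1 < s.re := by linarith
  have hz1 : zeta2Neg 1 s
      = (1 / 2) * riemannZeta (s - 2) - (1 / 2) * riemannZeta (s - 1) := by
    unfold zeta2Neg
    have hterm : ∀ n : ℕ, (∑ k ∈ Finset.range n, ((k : ℂ) + 1) ^ 1) * ((n : ℂ) + 1) ^ (-s)
        = (1 / 2) * ((n : ℂ) + 1) ^ (-(s - 2)) - (1 / 2) * ((n : ℂ) + 1) ^ (-(s - 1)) := by
      intro n
      rw [sum_pow1, show -(s - 2) = ((2 : ℕ) : ℂ) - s by push_cast; ring,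
        show -(s - 1) = ((1 : ℕ) : ℂ) - s by push_cast; ring, powgen_aux, powgen_aux]
      ring
    rw [tsum_congr hterm,
      Summable.tsum_sub ((summable_cpow_aux _ h2).mul_left _) ((summable_cpow_aux _ h1).mul_left _),
      tsum_mul_left, tsum_mul_left, tsum_cpow_aux _ h2, tsum_cpow_aux _ h1]
  have hz2 : zeta2Neg 2 (s + 1)
      = (1 / 3) * riemannZeta (s - 2) - ((1 / 2) * riemannZeta (s - 1)
        - (1 / 6) * riemannZeta s) := by
    unfold zeta2Neg
    have hterm : ∀ n : ℕ,
        (∑ k ∈ Finset.range n, ((k : ℂ) + 1) ^ 2) * ((n : ℂ) + 1) ^ (-(s + 1))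
        = (1 / 3) * ((n : ℂ) + 1) ^ (-(s - 2)) - ((1 / 2) * ((n : ℂ) + 1) ^ (-(s - 1))
          - (1 / 6) * ((n : ℂ) + 1) ^ (-s)) := by
      intro n
      rw [show -(s - 2) = ((3 : ℕ) : ℂ) - (s + 1) by push_cast; ring,
        show -(s - 1) = ((2 : ℕ) : ℂ) - (s + 1) by push_cast; ring,
        show -s = ((1 : ℕ) : ℂ) - (s + 1) by push_cast; ring,
        powgen_aux, powgen_aux, powgen_aux, sum_pow2]
      ring
    rw [tsum_congr hterm,
      Summable.tsum_sub ((summable_cpow_aux _ h2).mul_left _)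
        (((summable_cpow_aux _ h1).mul_left _).sub ((summable_cpow_aux _ h0).mul_left _)),
      Summable.tsum_sub ((summable_cpow_aux _ h1).mul_left _) ((summable_cpow_aux _ h0).mul_left _),
      tsum_mul_left, tsum_mul_left, tsum_mul_left,
      tsum_cpow_aux _ h2, tsum_cpow_aux _ h1, tsum_cpow_aux _ h0]
  have hz3 : zeta2Neg 3 (s + 2)
      = (1 / 4) * riemannZeta (s - 2) - ((1 / 2) * riemannZeta (s - 1)
        - (1 / 4) * riemannZeta s) := by
    unfold zeta2Neg
    have hterm : ∀ n : ℕ,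
        (∑ k ∈ Finset.range n, ((k : ℂ) + 1) ^ 3) * ((n : ℂ) + 1) ^ (-(s + 2))
        = (1 / 4) * ((n : ℂ) + 1) ^ (-(s - 2)) - ((1 / 2) * ((n : ℂ) + 1) ^ (-(s - 1))
          - (1 / 4) * ((n : ℂ) + 1) ^ (-s)) := by
      intro n
      rw [show -(s - 2) = ((4 : ℕ) : ℂ) - (s + 2) by push_cast; ring,
        show -(s - 1) = ((3 : ℕ) : ℂ) - (s + 2) by push_cast; ring,
        show -s = ((2 : ℕ) : ℂ) - (s + 2) by push_cast; ring,
        powgen_aux, powgen_aux, powgen_aux, sum_pow3]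
      ring
    rw [tsum_congr hterm,
      Summable.tsum_sub ((summable_cpow_aux _ h2).mul_left _)
        (((summable_cpow_aux _ h1).mul_left _).sub ((summable_cpow_aux _ h0).mul_left _)),
      Summable.tsum_sub ((summable_cpow_aux _ h1).mul_left _) ((summable_cpow_aux _ h0).mul_left _),
      tsum_mul_left, tsum_mul_left, tsum_mul_left,
      tsum_cpow_aux _ h2, tsum_cpow_aux _ h1, tsum_cpow_aux _ h0]
  rw [hz1, hz2, hz3]
  ring
end

section
/- Let c be a positive integer and let t ∈ ℂ with e^{ct} ≠ 1. Then, summing over all c-th roots of unity ξ in ℂ other than 1, ∑_{ξ^c = 1, ξ ≠ 1} ξ e^t / (1 − ξ e^t) = e^t/(e^t − 1) − c·e^{ct}/(e^{ct} − 1). (The finite roots-of-unity identity established in Section 6 in the evaluation of p-adic L-values; note e^{ct} ≠ 1 guarantees that all denominators 1 − ξe^t and e^t − 1 are nonzero.) -/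
open Complex Finset Polynomial

/-!
The `n`-th roots of unity are the simple roots of `X ^ n - 1`, so `∑ ξ, x / (x - ξ)` is `x` times
the logarithmic derivative of `X ^ n - 1`, namely `n x ^ n / (x ^ n - 1)`. Since `ξ ↦ ξ⁻¹` permutes
the roots of unity and `ξ⁻¹ z / (1 - ξ⁻¹ z) = -z / (z - ξ)`, this evaluates
`∑ ξ, ξ z / (1 - ξ z)`; removing the term `ξ = 1` and taking `z = e^t` gives the identity.
-/

theorem sum_nthRootsFinset_one_comp_inv {K M : Type*} [Field K] [AddCommMonoid M] (n : ℕ)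
    (f : K → M) :
    ∑ ξ ∈ nthRootsFinset n (1 : K), f ξ⁻¹ = ∑ ξ ∈ nthRootsFinset n (1 : K), f ξ := by
  have hinv : ∀ ξ ∈ nthRootsFinset n (1 : K), ξ⁻¹ ∈ nthRootsFinset n (1 : K) := by
    intro ξ hξ
    rcases n.eq_zero_or_pos with rfl | hn
    · simp at hξ
    · rw [mem_nthRootsFinset hn] at hξ ⊢
      rw [inv_pow, hξ, inv_one]
  exact sum_nbij' (·⁻¹) (·⁻¹) hinv hinv (fun ξ _ ↦ inv_inv ξ) (fun ξ _ ↦ inv_inv ξ)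
    (fun _ _ ↦ rfl)

namespace IsPrimitiveRoot

variable {K : Type*} [Field K] {ζ : K} {n : ℕ}

theorem sum_nthRootsFinset_div_sub (hζ : IsPrimitiveRoot ζ n) {x : K} (hx : x ^ n ≠ 1) :
    ∑ ξ ∈ nthRootsFinset n (1 : K), x / (x - ξ) = n * x ^ n / (x ^ n - 1) := by
  classical
  have hn : n ≠ 0 := by rintro rfl; exact hx (pow_zero x)
  have hx' : (X ^ n - C 1 : K[X]).eval x ≠ 0 := by simpa [sub_eq_zero] using hx
  have hlog := (X_pow_sub_one_splits hζ).eval_derivative_div_eval_of_ne_zero hx'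
  rw [← nthRoots] at hlog
  simp only [derivative_sub, derivative_X_pow, derivative_C, sub_zero, eval_mul, eval_pow, eval_X,
    eval_sub, eval_C] at hlog
  rw [nthRootsFinset_def, ← Multiset.toFinset_eq hζ.nthRoots_one_nodup, sum_mk]
  simp_rw [div_eq_mul_one_div x]
  rw [Multiset.sum_map_mul_left, ← hlog, ← mul_div_assoc, mul_left_comm, ← pow_succ',
    Nat.sub_add_cancel (Nat.pos_of_ne_zero hn)]

theorem sum_nthRootsFinset_mul_div_one_sub_mul (hζ : IsPrimitiveRoot ζ n) {z : K}
    (hz : z ^ n ≠ 1) :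
    ∑ ξ ∈ nthRootsFinset n (1 : K), ξ * z / (1 - ξ * z) = n * z ^ n / (1 - z ^ n) := by
  have hterm : ∀ ξ ∈ nthRootsFinset n (1 : K), ξ⁻¹ * z / (1 - ξ⁻¹ * z) = -(z / (z - ξ)) := by
    intro ξ hξ
    have hξ0 : ξ ≠ 0 := ne_zero_of_mem_nthRootsFinset one_ne_zero hξ
    rw [← mul_div_mul_left _ _ hξ0, mul_sub, mul_one, ← mul_assoc, mul_inv_cancel₀ hξ0, one_mul,
      ← neg_sub z ξ, div_neg]
  rw [← sum_nthRootsFinset_one_comp_inv, sum_congr rfl hterm, sum_neg_distrib,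
    hζ.sum_nthRootsFinset_div_sub hz, ← div_neg, neg_sub]

theorem sum_erase_one_mul_div_one_sub_mul [DecidableEq K] (hζ : IsPrimitiveRoot ζ n) {z : K}
    (hz : z ^ n ≠ 1) :
    ∑ ξ ∈ (nthRootsFinset n (1 : K)).erase 1, ξ * z / (1 - ξ * z)
      = z / (z - 1) - n * z ^ n / (z ^ n - 1) := by
  have hn : 0 < n := Nat.pos_of_ne_zero (by rintro rfl; exact hz (pow_zero z))
  rw [sum_erase_eq_sub (one_mem_nthRootsFinset hn), hζ.sum_nthRootsFinset_mul_div_one_sub_mul hz,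
    one_mul, ← neg_sub z 1, ← neg_sub (z ^ n) 1, div_neg, div_neg]
  ring

end IsPrimitiveRoot

theorem sum_rootsOfUnity_exp_general (c : ℕ) (t : ℂ)
    (ht : Complex.exp ((c : ℂ) * t) ≠ 1) :
    ∑ ξ ∈ (Polynomial.nthRootsFinset c (1 : ℂ)).erase 1,
        ξ * Complex.exp t / (1 - ξ * Complex.exp t)
      = Complex.exp t / (Complex.exp t - 1)
        - (c : ℂ) * Complex.exp ((c : ℂ) * t) / (Complex.exp ((c : ℂ) * t) - 1) := by
  have hc : c ≠ 0 := by rintro rfl; simp at ht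
  rw [Complex.exp_nat_mul] at ht ⊢
  exact (Complex.isPrimitiveRoot_exp c hc).sum_erase_one_mul_div_one_sub_mul ht

/-- The roots-of-unity identity from Section 6: for `c ≥ 1` and `t ∈ ℂ` with
`e^{ct} ≠ 1`, summing over the `c`-th roots of unity `ξ ≠ 1`,
`∑_{ξ^c = 1, ξ ≠ 1} ξ e^t / (1 - ξ e^t) = e^t/(e^t - 1) - c e^{ct}/(e^{ct} - 1)`. -/
theorem sum_rootsOfUnity_exp (c : ℕ) (hc : 0 < c) (t : ℂ)
    (ht : Complex.exp ((c : ℂ) * t) ≠ 1) :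
    ∑ ξ ∈ (Polynomial.nthRootsFinset c (1 : ℂ)).erase 1,
        ξ * Complex.exp t / (1 - ξ * Complex.exp t)
      = Complex.exp t / (Complex.exp t - 1)
        - (c : ℂ) * Complex.exp ((c : ℂ) * t) / (Complex.exp ((c : ℂ) * t) - 1) :=
  sum_rootsOfUnity_exp_general c t ht
end
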